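/- arXiv:cs/0301024 — 3 statements merged into one kernel-verified Lean document; each statement's English description precedes it below -/
import Mathlib

section
/- Let Z be the q×q matrix with entries Z_{i,j} = ζ_{i-j+1} for j ≤ i, Z_{i,i+1} = i, and Z_{i,j} = 0 for j > i+1, where ζ_1,…,ζ_q are indeterminates. Then for every partition β of q, im_β(Z) = Σ_{|γ|=q} d_γ · χ^γ_β · ζ^γ, where the sum is over partitions γ of q, d_γ is the number of permutations in S_q of cycle type γ, χ^γ_β is the value of the character χ_β at cycle type γ, and ζ^γ = ζ_{γ_1}···ζ_{γ_r} for γ = (γ_1,…,γ_r). -/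
open Equiv MvPolynomial

/-- Value of the irreducible character of `S_q` indexed by the partition `lam`
on permutations of cycle type `mu` (a multiset recording all cycle lengths,
including fixed points), via the Frobenius character formula:
`χ_λ(μ)` is the coefficient of `x^(λ+δ)` in `(∏_{i<j} (x_i - x_j)) · p_μ`. -/
noncomputable def symCharMu {q : ℕ} (lam : Nat.Partition q) (mu : Multiset ℕ) : ℤ :=
  let L := lam.parts.sort (· ≥ ·)
  let l := L.length
  MvPolynomial.coeff
    (Finsupp.equivFunOnFinite.symm (fun i : Fin l => L.getD i 0 + (l - 1 - (i : ℕ))))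
    ((∏ p ∈ Finset.univ.filter (fun p : Fin l × Fin l => p.1 < p.2), (X p.1 - X p.2)) *
      (mu.map (fun c => ∑ i : Fin l, (X i : MvPolynomial (Fin l) ℤ) ^ c)).prod)

/-- The irreducible character `χ_λ` of the symmetric group, evaluated at `g`. -/
noncomputable def symChar {q : ℕ} (lam : Nat.Partition q) (g : Equiv.Perm (Fin q)) : ℤ :=
  symCharMu lam g.partition.parts

/-- The immanant `IM_λ(M) = Σ_π χ_λ(π) ∏ᵢ M_{i,π(i)}`. -/
noncomputable def immanant {q : ℕ} {K : Type*} [CommRing K]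
    (lam : Nat.Partition q) (M : Matrix (Fin q) (Fin q) K) : K :=
  ∑ g : Equiv.Perm (Fin q), (symChar lam g : K) * ∏ i, M i (g i)

/-- The `i`-th part (0-indexed) of a partition, `0` if `i` exceeds the number of parts. -/
def Nat.Partition.part {q : ℕ} (lam : Nat.Partition q) (i : ℕ) : ℕ :=
  (lam.parts.sort (· ≥ ·)).getD i 0

/-- The block diagonal matrix `diag(A, B)`. -/
def dsum {p q : ℕ} {K : Type*} [Zero K] (A : Matrix (Fin p) (Fin p) K)
    (B : Matrix (Fin q) (Fin q) K) : Matrix (Fin (p + q)) (Fin (p + q)) K :=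
  Matrix.reindex finSumFinEquiv finSumFinEquiv (Matrix.fromBlocks A 0 0 B)

/-- `H_q`: the `q × q` matrix whose `(i,j)` entry is `1/i` (rows 1-indexed). -/
noncomputable def Hmat (K : Type*) [DivisionRing K] (q : ℕ) : Matrix (Fin q) (Fin q) K :=
  fun i _ => (((i : ℕ) + 1 : K))⁻¹

/-- `T_q`: the matrix with `T_{i,j} = (-1)^(i-j)` for `j ≤ i`, `T_{i,i+1} = i`, else `0`
(1-indexed). -/
def Tmat (K : Type*) [Ring K] (q : ℕ) : Matrix (Fin q) (Fin q) K :=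
  fun i j => if (j : ℕ) ≤ (i : ℕ) then (-1 : K) ^ ((i : ℕ) - (j : ℕ))
    else if (j : ℕ) = (i : ℕ) + 1 then ((i : ℕ) + 1 : K) else 0

/-- `E_q = D_q T_q` where `D_q = diag(1, 1/2, …, 1/q)`. -/
noncomputable def Emat (K : Type*) [Field K] (q : ℕ) : Matrix (Fin q) (Fin q) K :=
  (Matrix.diagonal fun i : Fin q => (((i : ℕ) + 1 : K))⁻¹) * Tmat K q

/-- The column partition `(1^q)`. -/
def onePart (q : ℕ) : Nat.Partition q :=
  ⟨Multiset.replicate q 1, by intro i hi; simp only [Multiset.eq_of_mem_replicate hi]; norm_num, by simp⟩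

/-- Littlewood's matrix `Z`, with `Z_{i,j} = ζ_{i-j+1}` for `j ≤ i`, `Z_{i,i+1} = i`,
and `Z_{i,j} = 0` for `j > i+1` (1-indexed), where `ζ_k` is the indeterminate `X k`. -/
noncomputable def Zmat (q : ℕ) : Matrix (Fin q) (Fin q) (MvPolynomial ℕ ℚ) :=
  fun i j => if (j : ℕ) ≤ (i : ℕ) then X ((i : ℕ) - (j : ℕ) + 1)
    else if (j : ℕ) = (i : ℕ) + 1 then ((i : ℕ) + 1 : MvPolynomial ℕ ℚ) else 0

/-- `d_γ`: the number of permutations in `S_q` of cycle type `γ` (cycle type taken to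
include fixed points as parts equal to `1`). -/
noncomputable def numOfCycleType (q : ℕ) (g : Nat.Partition q) : ℕ :=
  Nat.card {π : Equiv.Perm (Fin q) // π.partition.parts = g.parts}

section Helpers
open Equiv.Perm List Finset

variable {α : Type*} {β : Type*} [DecidableEq α] [Fintype α] [DecidableEq β] [Fintype β]

lemma cycleType_permCongr (e : α ≃ β) (σ : Equiv.Perm α) :
    (e.permCongr σ).cycleType = σ.cycleType := by
  have h : e.permCongr σ = σ.extendDomain
      (e.trans (Equiv.subtypeUnivEquiv (p := fun _ : β => True) (fun _ => trivial)).symm) := by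
    ext b
    rw [Equiv.Perm.extendDomain_apply_subtype _ _ trivial]
    simp
  rw [h, Equiv.Perm.cycleType_extendDomain]

lemma parts_permCongr (e : α ≃ β) (h : Fintype.card α = Fintype.card β) (σ : Equiv.Perm α) :
    (e.permCongr σ).partition.parts = σ.partition.parts := by
  rw [Equiv.Perm.parts_partition, Equiv.Perm.parts_partition, cycleType_permCongr,
    ← Equiv.Perm.sum_cycleType σ, ← Equiv.Perm.sum_cycleType (e.permCongr σ),
    cycleType_permCongr, h]

lemma sum_perm_transport {R : Type*} [AddCommMonoid R]
    (h : Fintype.card α = Fintype.card β) (f : Multiset ℕ → R) :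
    ∑ σ : Equiv.Perm α, f σ.partition.parts = ∑ τ : Equiv.Perm β, f τ.partition.parts := by
  classical
  refine Fintype.sum_equiv (Equiv.permCongr (Fintype.equivOfCardEq h)) _ _ (fun σ => ?_)
  rw [parts_permCongr _ h]

lemma card_compl_list {q : ℕ} (l : List (Fin q)) (hl : l.Nodup) :
    Fintype.card {y : Fin q // y ∉ l} = q - l.length := by
  classical
  rw [Fintype.card_subtype]
  have : (Finset.univ.filter (fun y : Fin q => y ∉ l)) = l.toFinsetᶜ := by
    ext y; simp
  rw [this, Finset.card_compl, List.toFinset_card_of_nodup hl, Fintype.card_fin]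

lemma parts_formPerm_mul_extendDomain {q : ℕ} (l : List (Fin q)) (hl : l.Nodup) (hne : l ≠ [])
    {κ : Type*} [Fintype κ] [DecidableEq κ] (hκ : Fintype.card κ = q - l.length)
    (e : κ ≃ {y : Fin q // y ∉ l}) (σ : Equiv.Perm κ) :
    (List.formPerm l * σ.extendDomain e).partition.parts
      = l.length ::ₘ σ.partition.parts := by
  classical
  have hsub : σ.support.card ≤ Fintype.card κ := by
    simpa using Finset.card_le_univ σ.support
  have hlen1 : 1 ≤ l.length := by
    cases l with
    | nil => exact absurd rfl hne
    | cons a l => simp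
  have hlenq : l.length ≤ q := by
    simpa [List.toFinset_card_of_nodup hl] using
      (Finset.card_le_univ l.toFinset).trans_eq (by simp)
  have hdisj : Equiv.Perm.Disjoint (List.formPerm l) (σ.extendDomain e) := by
    intro x
    by_cases hx : x ∈ l
    · right
      exact Equiv.Perm.extendDomain_apply_not_subtype _ _ (by simpa using hx)
    · left
      exact List.formPerm_apply_of_notMem hx
  rcases eq_or_lt_of_le hlen1 with h1 | h2
  · -- singleton case
    obtain ⟨x, rfl⟩ := List.length_eq_one_iff.mp h1.symm
    rw [List.formPerm_singleton, one_mul, Equiv.Perm.parts_partition,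
      Equiv.Perm.parts_partition, Equiv.Perm.cycleType_extendDomain]
    have hs : (σ.extendDomain e).support.card = σ.support.card := by
      rw [← Equiv.Perm.sum_cycleType, Equiv.Perm.cycleType_extendDomain,
        Equiv.Perm.sum_cycleType]
    rw [hs]
    have hlen : ([x] : List (Fin q)).length = 1 := rfl
    rw [hlen] at hκ ⊢
    have hq : q - σ.support.card = (q - 1 - σ.support.card) + 1 := by omega
    rw [Fintype.card_fin, hκ, hq, Multiset.replicate_succ]
    rw [add_comm (σ.cycleType) _, Multiset.cons_add, add_comm]
  · -- length ≥ 2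
    have h2' : 2 ≤ l.length := h2
    have hc : (List.formPerm l).IsCycle := List.isCycle_formPerm hl h2'
    have hsupp : (List.formPerm l).support = l.toFinset :=
      List.support_formPerm_of_nodup l hl (by
        intro x hx
        rw [hx] at h2'
        simp at h2')
    have hcard : (List.formPerm l).support.card = l.length := by
      rw [hsupp, List.toFinset_card_of_nodup hl]
    have hct : (List.formPerm l * σ.extendDomain e).cycleType
        = l.length ::ₘ σ.cycleType := by
      rw [Equiv.Perm.Disjoint.cycleType_mul hdisj, hc.cycleType, hcard, Equiv.Perm.cycleType_extendDomain]
      rfl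
    have hs : (List.formPerm l * σ.extendDomain e).support.card
        = l.length + σ.support.card := by
      rw [← Equiv.Perm.sum_cycleType, hct, Multiset.sum_cons, Equiv.Perm.sum_cycleType]
    rw [Equiv.Perm.parts_partition, Equiv.Perm.parts_partition, hct, hs, Fintype.card_fin, hκ]
    have : q - (l.length + σ.support.card) = (q - l.length) - σ.support.card := by omega
    rw [this, Multiset.cons_add]
end Helpers


section Cyc
open Equiv.Perm List Finset

variable {n : ℕ}

/-- The distinguished top element. -/
private abbrev tt (n : ℕ) : Fin (n+1) := Fin.last n

/-- The cycle word of `π` at the top element. -/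
noncomputable def cword (π : Equiv.Perm (Fin (n+1))) : List (Fin (n+1)) :=
  tt n :: List.ofFn (fun i : Fin ((π.cycleOf (tt n)).support.card - 1) =>
    (π ^ ((i : ℕ)+1)) (tt n))

lemma cword_eq_toList {π : Equiv.Perm (Fin (n+1))} (h : tt n ∈ π.support) :
    cword π = π.toList (tt n) := by
  have hc2 : 2 ≤ (π.cycleOf (tt n)).support.card := by
    rw [← Equiv.Perm.length_toList]
    exact Equiv.Perm.two_le_length_toList_iff_mem_support.mpr h
  apply List.ext_getElem
  · simp [cword, Equiv.Perm.length_toList]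
    omega
  · intro i h1 h2
    rcases i with _ | j
    · have := Equiv.Perm.toList_getElem_zero π (tt n) h
      simp [cword, this]
    · have hg := Equiv.Perm.getElem_toList π (tt n) (j+1) (by omega)
      simp only [cword, List.getElem_cons_succ, List.getElem_ofFn]
      rw [hg]

lemma cword_of_fixed {π : Equiv.Perm (Fin (n+1))} (h : π (tt n) = tt n) :
    cword π = [tt n] := by
  have : (π.cycleOf (tt n)).support.card = 0 := by
    rw [Finset.card_eq_zero, Equiv.Perm.support_cycleOf_eq_nil_iff]
    simpa using h
  simp [cword, this]

lemma mem_cword_iff {π : Equiv.Perm (Fin (n+1))} {x : Fin (n+1)} :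
    x ∈ cword π ↔ π.SameCycle (tt n) x := by
  by_cases h : tt n ∈ π.support
  · rw [cword_eq_toList h, Equiv.Perm.mem_toList_iff]
    exact ⟨fun ⟨h1, _⟩ => h1, fun h1 => ⟨h1, h⟩⟩
  · have hfix : π (tt n) = tt n := by simpa using h
    rw [cword_of_fixed hfix]
    simp only [List.mem_singleton]
    constructor
    · rintro rfl; exact Equiv.Perm.SameCycle.refl _ _
    · rintro ⟨k, rfl⟩
      rw [zpow_apply_eq_self_of_apply_eq_self hfix]

lemma head_mem_cword (π : Equiv.Perm (Fin (n+1))) : tt n ∈ cword π := by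
  simp [cword]

/-- Restriction of `π` to the complement of its top cycle. -/
noncomputable def restC (π : Equiv.Perm (Fin (n+1))) :
    Equiv.Perm {y : Fin (n+1) // y ∉ cword π} where
  toFun y := ⟨π y.1, by
    have := y.2
    rw [mem_cword_iff] at this ⊢
    rwa [Equiv.Perm.sameCycle_apply_right]⟩
  invFun y := ⟨π⁻¹ y.1, by
    have := y.2
    rw [mem_cword_iff] at this ⊢
    rwa [← Equiv.Perm.sameCycle_inv, Equiv.Perm.sameCycle_apply_right, Equiv.Perm.sameCycle_inv]⟩
  left_inv y := by simp
  right_inv y := by simp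

/-- Building a permutation from a cycle word and a permutation of the complement. -/
noncomputable def buildC (x : Σ l : List (Fin (n+1)), Equiv.Perm {y : Fin (n+1) // y ∉ l}) :
    Equiv.Perm (Fin (n+1)) :=
  List.formPerm x.1 * x.2.extendDomain (Equiv.refl _)

lemma extend_apply_mem {l : List (Fin (n+1))} (ρ : Equiv.Perm {y : Fin (n+1) // y ∉ l})
    {x : Fin (n+1)} (hx : x ∈ l) : ρ.extendDomain (Equiv.refl _) x = x :=
  Equiv.Perm.extendDomain_apply_not_subtype _ _ (by simpa using hx)

lemma extend_apply_not_mem {l : List (Fin (n+1))} (ρ : Equiv.Perm {y : Fin (n+1) // y ∉ l})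
    {x : Fin (n+1)} (hx : x ∉ l) : ρ.extendDomain (Equiv.refl _) x = (ρ ⟨x, hx⟩ : _) := by
  have h := Equiv.Perm.extendDomain_apply_subtype (p := fun y : Fin (n+1) => y ∉ l)
    ρ (Equiv.refl _) hx
  simpa using h

lemma disjC {l : List (Fin (n+1))} (ρ : Equiv.Perm {y : Fin (n+1) // y ∉ l}) :
    Equiv.Perm.Disjoint (List.formPerm l) (ρ.extendDomain (Equiv.refl _)) := by
  intro x
  by_cases hx : x ∈ l
  · exact Or.inr (extend_apply_mem ρ hx)
  · exact Or.inl (List.formPerm_apply_of_notMem hx)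

lemma buildC_apply_mem {l : List (Fin (n+1))} (ρ : Equiv.Perm {y : Fin (n+1) // y ∉ l})
    {x : Fin (n+1)} (hx : x ∈ l) :
    buildC ⟨l, ρ⟩ x = List.formPerm l x := by
  rw [buildC, Equiv.Perm.mul_apply, extend_apply_mem ρ hx]

lemma buildC_apply_not_mem {l : List (Fin (n+1))} (ρ : Equiv.Perm {y : Fin (n+1) // y ∉ l})
    {x : Fin (n+1)} (hx : x ∉ l) :
    buildC ⟨l, ρ⟩ x = (ρ ⟨x, hx⟩ : _) := by
  rw [buildC, Equiv.Perm.mul_apply, extend_apply_not_mem ρ hx]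
  exact List.formPerm_apply_of_notMem (ρ ⟨x, hx⟩).2

lemma sigEqC (x y : Σ l : List (Fin (n+1)), Equiv.Perm {z : Fin (n+1) // z ∉ l})
    (h1 : x.1 = y.1)
    (h2 : ∀ z (hz : z ∉ x.1) (hz' : z ∉ y.1), (x.2 ⟨z, hz⟩ : Fin (n+1)) = (y.2 ⟨z, hz'⟩ : _)) :
    x = y := by
  obtain ⟨l, ρ⟩ := x
  obtain ⟨l', ρ'⟩ := y
  simp only at h1
  subst h1
  simp only [Sigma.mk.inj_iff, heq_eq_eq, true_and]
  refine Equiv.ext fun z => ?_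
  exact Subtype.ext (by simpa using h2 z.1 z.2 z.2)

lemma formPerm_cword (π : Equiv.Perm (Fin (n+1))) :
    List.formPerm (cword π) = π.cycleOf (tt n) := by
  by_cases h : tt n ∈ π.support
  · rw [cword_eq_toList h, Equiv.Perm.formPerm_toList]
  · have hfix : π (tt n) = tt n := by simpa using h
    rw [cword_of_fixed hfix, List.formPerm_singleton,
      Eq.comm, Equiv.Perm.cycleOf_eq_one_iff]
    exact hfix

lemma buildC_restC (π : Equiv.Perm (Fin (n+1))) : buildC ⟨cword π, restC π⟩ = π := by
  refine Equiv.ext fun x => ?_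
  by_cases hx : x ∈ cword π
  · rw [buildC_apply_mem _ hx, formPerm_cword]
    exact (mem_cword_iff.mp hx).cycleOf_apply
  · rw [buildC_apply_not_mem _ hx]
    rfl
end Cyc

section CL
open Equiv.Perm List Finset

variable {n : ℕ}

/-- Encoding of cycle words by their length-complement and entries. -/
def wordF (x : Σ a : Fin (n+1), (Fin (n - (a : ℕ)) ↪ Fin n)) : List (Fin (n+1)) :=
  tt n :: List.ofFn (fun i => Fin.castSucc (x.2 i))

lemma wordF_length (x : Σ a : Fin (n+1), (Fin (n - (a : ℕ)) ↪ Fin n)) :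
    (wordF x).length = n - (x.1 : ℕ) + 1 := by simp [wordF]

lemma wordF_nodup (x : Σ a : Fin (n+1), (Fin (n - (a : ℕ)) ↪ Fin n)) :
    (wordF x).Nodup := by
  rw [wordF, List.nodup_cons]
  constructor
  · simp only [List.mem_ofFn, Set.mem_range, not_exists]
    intro i h
    exact absurd h (Fin.castSucc_lt_last _).ne
  · rw [List.nodup_ofFn]
    exact fun i j h => x.2.injective (Fin.castSucc_injective n h)

lemma wordF_ne_nil (x : Σ a : Fin (n+1), (Fin (n - (a : ℕ)) ↪ Fin n)) :
    wordF x ≠ [] := by simp [wordF]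

lemma wordF_injective : Function.Injective (wordF (n := n)) := by
  rintro ⟨a, f⟩ ⟨a', f'⟩ h
  have hlen : n - (a : ℕ) = n - (a' : ℕ) := by
    have := congrArg List.length h
    simpa [wordF] using this
  have ha : a = a' := by
    have h1 : (a : ℕ) ≤ n := by omega
    have h2 : (a' : ℕ) ≤ n := by omega
    exact Fin.ext (by omega)
  subst ha
  simp only [wordF, List.cons.injEq, true_and] at h
  have hf : f = f' := by
    refine Function.Embedding.ext fun i => ?_
    have h2 := congrFun (List.ofFn_injective h) i
    exact Fin.castSucc_injective n h2
  subst hf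
  rfl

/-- The finset of possible cycle words. -/
noncomputable def CLset (n : ℕ) : Finset (List (Fin (n+1))) :=
  Finset.image wordF Finset.univ

lemma pow_tt_ne {π : Equiv.Perm (Fin (n+1))} {k : ℕ} (hk : 0 < k)
    (hkc : k < (π.cycleOf (tt n)).support.card) : (π ^ k) (tt n) ≠ tt n := by
  have hc : 0 < (π.cycleOf (tt n)).support.card := lt_trans hk hkc
  have ht : tt n ∈ π.support := by
    by_contra h
    rw [← Equiv.Perm.support_cycleOf_eq_nil_iff] at h
    simp [h] at hc
  intro hEq
  have hnd := Equiv.Perm.nodup_toList π (tt n)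
  have h1 := Equiv.Perm.getElem_toList π (tt n) k (by rw [Equiv.Perm.length_toList]; exact hkc)
  have h0 := Equiv.Perm.getElem_toList π (tt n) 0 (by rw [Equiv.Perm.length_toList]; omega)
  rw [List.nodup_iff_injective_get] at hnd
  have : (⟨k, by rw [Equiv.Perm.length_toList]; exact hkc⟩ : Fin (π.toList (tt n)).length) = ⟨0, by rw [Equiv.Perm.length_toList]; omega⟩ := hnd (by simp only [List.get_eq_getElem]; rw [h1, h0]; simpa using hEq)
  simp at this
  omega

lemma pow_tt_inj {π : Equiv.Perm (Fin (n+1))} {k m : ℕ}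
    (hkc : k < (π.cycleOf (tt n)).support.card) (hmc : m < (π.cycleOf (tt n)).support.card)
    (h : (π ^ k) (tt n) = (π ^ m) (tt n)) : k = m := by
  have hnd := Equiv.Perm.nodup_toList π (tt n)
  have h1 := Equiv.Perm.getElem_toList π (tt n) k (by rw [Equiv.Perm.length_toList]; exact hkc)
  have h2 := Equiv.Perm.getElem_toList π (tt n) m (by rw [Equiv.Perm.length_toList]; exact hmc)
  rw [List.nodup_iff_injective_get] at hnd
  have : (⟨k, by rw [Equiv.Perm.length_toList]; exact hkc⟩ : Fin (π.toList (tt n)).length) = ⟨m, by rw [Equiv.Perm.length_toList]; exact hmc⟩ := hnd (by simp only [List.get_eq_getElem]; rw [h1, h2]; exact h)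
  simpa using this

lemma cword_mem_CLset (π : Equiv.Perm (Fin (n+1))) : cword π ∈ CLset n := by
  set c := (π.cycleOf (tt n)).support.card with hc
  have hcle : c ≤ n + 1 := by
    rw [hc]; simpa using Finset.card_le_univ (π.cycleOf (tt n)).support
  set a : Fin (n+1) := ⟨n - (c - 1), Nat.lt_succ_of_le (Nat.sub_le n (c-1))⟩ with haa
  have hav : n - (a : ℕ) = c - 1 := by
    have h1 : (a : ℕ) = n - (c - 1) := rfl
    omega
  have hbound : ∀ i : Fin (n - (a : ℕ)), (i : ℕ) + 1 < c := by
    intro i; have h2 := i.2; omega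
  refine Finset.mem_image.mpr ⟨⟨a, ⟨fun i =>
    Fin.castPred ((π ^ ((i : ℕ)+1)) (tt n)) (pow_tt_ne (Nat.succ_pos _) (hbound i)), ?_⟩⟩,
    Finset.mem_univ _, ?_⟩
  · intro i j h
    have h2 := congrArg (Fin.castSucc) h
    rw [Fin.castSucc_castPred, Fin.castSucc_castPred] at h2
    have h3 := pow_tt_inj (k := (i:ℕ)+1) (m := (j:ℕ)+1) (hbound i) (hbound j) h2
    exact Fin.ext (by omega)
  · rw [wordF, cword]
    congr 1
    refine List.ext_getElem ?_ ?_
    · rw [List.length_ofFn, List.length_ofFn]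
      exact hav
    · intro i h1 h2
      have h3 : i + 1 < c := by
        rw [List.length_ofFn] at h2; omega
      rw [List.getElem_ofFn, List.getElem_ofFn]
      exact Fin.castSucc_castPred _ (pow_tt_ne (Nat.succ_pos _) h3)
end CL

section CycSum
open Equiv.Perm List Finset

variable {n : ℕ}

lemma nodup_getElem_inj {α : Type*} {l : List α} (h : l.Nodup) {i j : ℕ}
    (hi : i < l.length) (hj : j < l.length) (hij : l[i] = l[j]) : i = j := by
  rw [List.nodup_iff_injective_get] at h
  have := h (a₁ := ⟨i, hi⟩) (a₂ := ⟨j, hj⟩) (by simpa using hij)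
  simpa using this

lemma buildC_word_eq (x : Σ a : Fin (n+1), (Fin (n - (a : ℕ)) ↪ Fin n))
    (ρ : Equiv.Perm {y : Fin (n+1) // y ∉ wordF x}) :
    cword (buildC ⟨wordF x, ρ⟩) = wordF x := by
  have hnd : (wordF x).Nodup := wordF_nodup x
  have hhead : tt n ∈ wordF x := by rw [wordF]; exact List.mem_cons_self
  have hl0 : ∀ h : 0 < (wordF x).length, (wordF x)[0] = tt n := fun _ => rfl
  by_cases hv : n - (x.1 : ℕ) = 0
  · have hl1 : wordF x = [tt n] := by
      rw [wordF]
      congr 1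
      apply List.length_eq_zero_iff.mp
      simp [hv]
    have hfix : buildC ⟨wordF x, ρ⟩ (tt n) = tt n := by
      rw [buildC_apply_mem _ hhead]
      conv_lhs => rw [hl1]
      simp
    rw [cword_of_fixed hfix, hl1]
  · have h2 : 2 ≤ (wordF x).length := by rw [wordF_length]; omega
    set σ := buildC ⟨wordF x, ρ⟩ with hσ
    have hfp : List.formPerm (wordF x) (tt n) = (wordF x)[1] := by
      conv_lhs => rw [← hl0 (by omega)]
      rw [List.formPerm_apply_getElem _ hnd 0 (by omega)]
      congr 1
      rw [Nat.zero_add, Nat.mod_eq_of_lt (by omega : 1 < (wordF x).length)]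
    have hfpne : List.formPerm (wordF x) (tt n) ≠ tt n := by
      rw [hfp]
      intro h
      have := nodup_getElem_inj hnd (by omega) (by omega) (h.trans (hl0 (by omega)).symm)
      omega
    have hσt : σ (tt n) ≠ tt n := by
      rw [hσ, buildC_apply_mem _ hhead]
      exact hfpne
    have hcyc : σ.cycleOf (tt n) = List.formPerm (wordF x) := by
      rw [hσ, buildC,
        Equiv.Perm.cycleOf_mul_of_apply_right_eq_self (disjC ρ).commute _
          (extend_apply_mem ρ hhead)]
      exact (List.isCycle_formPerm hnd h2).cycleOf_eq hfpne
    have hcard : (σ.cycleOf (tt n)).support.card = (wordF x).length := by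
      rw [hcyc, List.support_formPerm_of_nodup _ hnd
        (fun z hz => by rw [hz] at h2; simp at h2), List.toFinset_card_of_nodup hnd]
    rw [cword]
    refine List.ext_getElem ?_ ?_
    · have hlen := wordF_length x
      rw [List.length_cons, List.length_ofFn, hcard]
      omega
    · intro i h1i h2i
      rcases i with _ | j
      · exact (hl0 _).symm
      · simp only [List.getElem_cons_succ, List.getElem_ofFn]
        have hj1 : j + 1 < (wordF x).length := h2i
        have hpow : σ ^ (j+1)
            = (List.formPerm (wordF x))^(j+1) * (ρ.extendDomain (Equiv.refl _))^(j+1) := by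
          rw [hσ, buildC]
          exact (disjC ρ).commute.mul_pow _
        show (σ ^ (j+1)) (tt n) = _
        rw [hpow, Equiv.Perm.mul_apply,
          Equiv.Perm.pow_apply_eq_self_of_apply_eq_self (extend_apply_mem ρ hhead)]
        conv_lhs => rw [← hl0 (by omega)]
        rw [List.formPerm_pow_apply_getElem _ hnd (j+1) 0 (by omega)]
        congr 1
        rw [Nat.zero_add, Nat.mod_eq_of_lt hj1]

lemma jC_buildC {l : List (Fin (n+1))} (hl : l ∈ CLset n)
    (ρ : Equiv.Perm {y : Fin (n+1) // y ∉ l}) :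
    (⟨cword (buildC ⟨l, ρ⟩), restC (buildC ⟨l, ρ⟩)⟩ :
      Σ l : List (Fin (n+1)), Equiv.Perm {y : Fin (n+1) // y ∉ l}) = ⟨l, ρ⟩ := by
  obtain ⟨x, -, rfl⟩ := Finset.mem_image.mp hl
  refine sigEqC _ _ (buildC_word_eq x ρ) ?_
  intro z hz hz'
  exact buildC_apply_not_mem ρ hz'

lemma cyc_sum {M : Type*} [AddCommMonoid M] (n : ℕ) (H : Multiset ℕ → M) :
    ∑ π : Equiv.Perm (Fin (n+1)), H π.partition.parts
      = ∑ a : Fin (n+1), (Nat.descFactorial n (n - (a : ℕ))) •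
          ∑ π' : Equiv.Perm (Fin (a : ℕ)), H ((n - (a : ℕ) + 1) ::ₘ π'.partition.parts) := by
  classical
  have step1 : ∑ π : Equiv.Perm (Fin (n+1)), H π.partition.parts
      = ∑ x ∈ (CLset n).sigma
          (fun l => (Finset.univ : Finset (Equiv.Perm {y : Fin (n+1) // y ∉ l}))),
          H (buildC x).partition.parts := by
    refine Finset.sum_bij' (fun π _ => ⟨cword π, restC π⟩) (fun x _ => buildC x) ?_ ?_ ?_ ?_ ?_
    · intro π _
      exact Finset.mem_sigma.mpr ⟨cword_mem_CLset π, Finset.mem_univ _⟩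
    · intro x _
      exact Finset.mem_univ _
    · intro π _
      exact buildC_restC π
    · rintro ⟨l, ρ⟩ hx
      exact jC_buildC (Finset.mem_sigma.mp hx).1 ρ
    · intro π _
      rw [buildC_restC]
  rw [step1, Finset.sum_sigma, CLset, Finset.sum_image (fun x _ y _ h => wordF_injective h),
    ← Finset.univ_sigma_univ, Finset.sum_sigma]
  refine Finset.sum_congr rfl (fun a _ => ?_)
  have inner : ∀ f : Fin (n - (a : ℕ)) ↪ Fin n,
      ∑ ρ : Equiv.Perm {y : Fin (n+1) // y ∉ wordF ⟨a, f⟩},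
          H (buildC ⟨wordF ⟨a,f⟩, ρ⟩).partition.parts
        = ∑ π' : Equiv.Perm (Fin (a : ℕ)),
            H ((n - (a : ℕ) + 1) ::ₘ π'.partition.parts) := by
    intro f
    have hnd := wordF_nodup ⟨a, f⟩
    have hlen : (wordF ⟨a, f⟩).length = n - (a : ℕ) + 1 := wordF_length _
    have hcard : Fintype.card {y : Fin (n+1) // y ∉ wordF ⟨a, f⟩} = (a : ℕ) := by
      rw [card_compl_list _ hnd, hlen]
      have := a.2
      omega
    rw [← sum_perm_transport (α := {y : Fin (n+1) // y ∉ wordF (⟨a,f⟩ : Σ a : Fin (n+1), (Fin (n - (a : ℕ)) ↪ Fin n))}) (β := Fin (a : ℕ))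
      (by rw [hcard, Fintype.card_fin]) (fun μ => H ((n - (a:ℕ) + 1) ::ₘ μ))]
    refine Finset.sum_congr rfl (fun ρ _ => ?_)
    simp only [buildC]
    rw [parts_formPerm_mul_extendDomain _ hnd (wordF_ne_nil _)
      (card_compl_list _ hnd) (Equiv.refl _) ρ, hlen]
  rw [Finset.sum_congr rfl (fun f _ => inner f), Finset.sum_const]
  congr 1
  rw [Finset.card_univ, Fintype.card_embedding_eq]
  simp
end CycSum


section MatPeel
open Equiv.Perm List Finset

variable {n : ℕ}

/-- The interval `[a, n]` as a list in `Fin (n+1)`. -/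
def ivl (a : Fin (n+1)) : List (Fin (n+1)) :=
  List.ofFn (fun i : Fin (n - (a : ℕ) + 1) => ⟨(a : ℕ) + (i : ℕ), by
    have h1 := a.2
    have h2 := i.2
    omega⟩)

lemma ivl_length (a : Fin (n+1)) : (ivl a).length = n - (a : ℕ) + 1 := by simp [ivl]

lemma ivl_nodup (a : Fin (n+1)) : (ivl a).Nodup := by
  rw [ivl, List.nodup_ofFn]
  intro i j h
  have := congrArg Fin.val h
  simp only at this
  exact Fin.ext (by omega)

lemma mem_ivl_iff {a : Fin (n+1)} {x : Fin (n+1)} : x ∈ ivl a ↔ (a : ℕ) ≤ (x : ℕ) := by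
  rw [ivl, List.mem_ofFn]
  constructor
  · rintro ⟨i, rfl⟩
    simp
  · intro h
    have h1 := a.2
    have h2 := x.2
    refine ⟨⟨(x : ℕ) - (a : ℕ), by omega⟩, ?_⟩
    exact Fin.ext (by simp; omega)

lemma ivl_getElem (a : Fin (n+1)) (k : ℕ) (hk : k < (ivl a).length) :
    ((ivl a)[k] : ℕ) = (a : ℕ) + k := by
  simp only [ivl, List.getElem_ofFn]

/-- Identification of `Fin a` with the complement of the interval. -/
def eaH (a : Fin (n+1)) : Fin (a : ℕ) ≃ {y : Fin (n+1) // y ∉ ivl a} where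
  toFun j := ⟨⟨(j : ℕ), lt_trans j.2 a.2⟩, by
    rw [mem_ivl_iff]
    simp only [not_le]
    exact j.2⟩
  invFun y := ⟨(y.1 : ℕ), by
    have := y.2
    rw [mem_ivl_iff] at this
    omega⟩
  left_inv j := rfl
  right_inv y := by ext; rfl

/-- The permutation built from `π' : Perm (Fin a)` and the interval cycle `[a, n]`. -/
def FmatP (a : Fin (n+1)) (π' : Equiv.Perm (Fin (a : ℕ))) : Equiv.Perm (Fin (n+1)) :=
  List.formPerm (ivl a) * π'.extendDomain (eaH a)

lemma FmatP_low {a : Fin (n+1)} (π' : Equiv.Perm (Fin (a : ℕ))) {x : Fin (n+1)}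
    (h : (x : ℕ) < (a : ℕ)) :
    ((FmatP a π' x : Fin (n+1)) : ℕ) = (π' ⟨(x : ℕ), h⟩ : ℕ) := by
  have hx : x ∉ ivl a := by rw [mem_ivl_iff]; omega
  rw [FmatP, Equiv.Perm.mul_apply]
  rw [Equiv.Perm.extendDomain_apply_subtype _ (eaH a) hx]
  have hni : ((eaH a) (π' ((eaH a).symm ⟨x, hx⟩)) : Fin (n+1)) ∉ ivl a :=
    ((eaH a) _).2
  rw [List.formPerm_apply_of_notMem hni]
  rfl

lemma FmatP_mid {a : Fin (n+1)} (π' : Equiv.Perm (Fin (a : ℕ))) {x : Fin (n+1)}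
    (h1 : (a : ℕ) ≤ (x : ℕ)) (h2 : (x : ℕ) < n) :
    ((FmatP a π' x : Fin (n+1)) : ℕ) = (x : ℕ) + 1 := by
  have hx : x ∈ ivl a := mem_ivl_iff.mpr h1
  rw [FmatP, Equiv.Perm.mul_apply,
    Equiv.Perm.extendDomain_apply_not_subtype _ (eaH a) (by simpa using hx)]
  have hk : (x : ℕ) - (a : ℕ) < (ivl a).length := by rw [ivl_length]; omega
  have hxe : x = (ivl a)[(x : ℕ) - (a : ℕ)] := by
    refine Fin.ext ?_
    rw [ivl_getElem]
    omega
  conv_lhs => rw [hxe]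
  rw [List.formPerm_apply_getElem _ (ivl_nodup a) _ hk]
  rw [ivl_getElem]
  rw [ivl_length]
  rw [Nat.mod_eq_of_lt (by omega)]
  omega

lemma FmatP_top {a : Fin (n+1)} (π' : Equiv.Perm (Fin (a : ℕ))) :
    ((FmatP a π' (tt n) : Fin (n+1)) : ℕ) = (a : ℕ) := by
  have ha := a.2
  have hx : tt n ∈ ivl a := mem_ivl_iff.mpr (by simp [tt]; omega)
  rw [FmatP, Equiv.Perm.mul_apply,
    Equiv.Perm.extendDomain_apply_not_subtype _ (eaH a) (by simpa using hx)]
  have hk : n - (a : ℕ) < (ivl a).length := by rw [ivl_length]; omega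
  have hxe : tt n = (ivl a)[n - (a : ℕ)] := by
    refine Fin.ext ?_
    rw [ivl_getElem]
    simp [tt]
    omega
  conv_lhs => rw [hxe]
  rw [List.formPerm_apply_getElem _ (ivl_nodup a) _ hk]
  rw [ivl_getElem, ivl_length, Nat.mod_self, Nat.add_zero]

lemma FmatP_parts {a : Fin (n+1)} (π' : Equiv.Perm (Fin (a : ℕ))) :
    (FmatP a π').partition.parts = (n - (a : ℕ) + 1) ::ₘ π'.partition.parts := by
  have ha := a.2
  rw [FmatP, parts_formPerm_mul_extendDomain _ (ivl_nodup a)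
    (by rw [← List.length_pos_iff]; rw [ivl_length]; omega)
    (by rw [ivl_length, Fintype.card_fin]; omega) (eaH a) π', ivl_length]


/-- The numeric weight. -/
def Nnum (a q : ℕ) : ℕ := ∏ i ∈ Finset.range (q - a), (a + i + 1)

lemma Nnum_eq_descFactorial {a q : ℕ} (h : a ≤ q) :
    Nnum a q = Nat.descFactorial q (q - a) := by
  rw [Nat.descFactorial_eq_prod_range, Nnum, ← Finset.prod_range_reflect]
  refine Finset.prod_congr rfl (fun i hi => ?_)
  rw [Finset.mem_range] at hi
  omega

lemma prod_fin_dite {R : Type*} [CommMonoid R] {q : ℕ} (g : Fin q → R) :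
    ∏ i : Fin q, g i = ∏ k ∈ Finset.range q, if h : k < q then g ⟨k, h⟩ else 1 := by
  rw [← Fin.prod_univ_eq_prod_range (fun k => if h : k < q then g ⟨k, h⟩ else 1) q]
  refine Fintype.prod_congr _ _ (fun i => ?_)
  rw [dif_pos i.2]

lemma Zmat_cast {q1 q2 : ℕ} (x y : Fin q1) (x' y' : Fin q2) (hx : (x : ℕ) = (x' : ℕ))
    (hy : (y : ℕ) = (y' : ℕ)) : Zmat q1 x y = Zmat q2 x' y' := by
  simp only [Zmat, hx, hy]

lemma FmatP_prod {a : Fin (n+1)} (π' : Equiv.Perm (Fin (a : ℕ))) :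
    ∏ i, Zmat (n+1) i (FmatP a π' i)
      = (Nnum (a : ℕ) n : MvPolynomial ℕ ℚ) * X (n - (a : ℕ) + 1)
          * ∏ i, Zmat (a : ℕ) i (π' i) := by
  have ha : (a : ℕ) ≤ n := by have := a.2; omega
  have hlowgen : ∀ (x : Fin (n+1)) (h : (x : ℕ) < (a : ℕ)),
      Zmat (n+1) x (FmatP a π' x) = Zmat (a : ℕ) ⟨(x : ℕ), h⟩ (π' ⟨(x : ℕ), h⟩) :=
    fun x h => Zmat_cast _ _ _ _ rfl (FmatP_low π' h)
  have hmidgen : ∀ (x : Fin (n+1)), (a : ℕ) ≤ (x : ℕ) → (x : ℕ) < n →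
      Zmat (n+1) x (FmatP a π' x) = (((x : ℕ) : MvPolynomial ℕ ℚ) + 1) := by
    intro x h1 h2
    have hmid := FmatP_mid π' h1 h2
    simp only [Zmat]
    rw [if_neg (by omega), if_pos hmid]
  have htopgen : ∀ (x : Fin (n+1)), (x : ℕ) = n →
      Zmat (n+1) x (FmatP a π' x) = X (n - (a : ℕ) + 1) := by
    intro x hx
    have hxt : x = tt n := Fin.ext (by simpa using hx)
    subst hxt
    have htop := FmatP_top π'
    simp only [Zmat]
    rw [if_pos (by rw [htop]; simpa using ha)]
    rw [htop]
    norm_num [tt]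
  rw [prod_fin_dite (fun i => Zmat (n+1) i (FmatP a π' i)), Finset.prod_range_succ]
  have hrange : Finset.range n = Finset.range ((a : ℕ) + (n - (a : ℕ))) := by
    congr 1
    omega
  rw [hrange, Finset.prod_range_add]
  have hp1 : (∏ k ∈ Finset.range (a : ℕ),
        if h : k < n+1 then Zmat (n+1) ⟨k, h⟩ (FmatP a π' ⟨k, h⟩) else 1)
      = ∏ i, Zmat (a : ℕ) i (π' i) := by
    rw [prod_fin_dite (fun i => Zmat (a : ℕ) i (π' i))]
    refine Finset.prod_congr rfl (fun k hk => ?_)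
    rw [Finset.mem_range] at hk
    rw [dif_pos (by omega : k < n+1), dif_pos hk]
    exact hlowgen ⟨k, by omega⟩ hk
  have hp2 : (∏ i ∈ Finset.range (n - (a : ℕ)),
        if h : (a : ℕ) + i < n+1 then
          Zmat (n+1) ⟨(a : ℕ) + i, h⟩ (FmatP a π' ⟨(a : ℕ) + i, h⟩) else 1)
      = (Nnum (a : ℕ) n : MvPolynomial ℕ ℚ) := by
    rw [Nnum, Nat.cast_prod]
    refine Finset.prod_congr rfl (fun i hi => ?_)
    rw [Finset.mem_range] at hi
    rw [dif_pos (by omega : (a : ℕ) + i < n+1)]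
    rw [hmidgen ⟨(a : ℕ) + i, by omega⟩ (Nat.le_add_right _ _)
      (by show (a : ℕ) + i < n; omega)]
    push_cast
    ring
  have hp3 : (if h : n < n+1 then Zmat (n+1) ⟨n, h⟩ (FmatP a π' ⟨n, h⟩) else 1)
      = X (n - (a : ℕ) + 1) := by
    rw [dif_pos (by omega : n < n+1)]
    exact htopgen ⟨n, by omega⟩ rfl
  rw [hp1, hp2, hp3]
  ring

/-- Structure predicate: above the image of the top element, the permutation shifts by one. -/
def Ppred (π : Equiv.Perm (Fin (n+1))) : Prop :=
  ∀ k : Fin (n+1), (π (tt n) : ℕ) ≤ (k : ℕ) → (k : ℕ) < n → (π k : ℕ) = (k : ℕ) + 1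

instance (π : Equiv.Perm (Fin (n+1))) : Decidable (Ppred π) := by
  unfold Ppred; infer_instance

lemma adm_struct {π : Equiv.Perm (Fin (n+1))}
    (adm : ∀ i : Fin (n+1), (π i : ℕ) ≤ (i : ℕ) + 1) : Ppred π := by
  have key : ∀ m : ℕ, ∀ k : ℕ, ∀ hk : k < n + 1, k < n → n - k ≤ m →
      (π (tt n) : ℕ) ≤ k → (π ⟨k, hk⟩ : ℕ) = k + 1 := by
    intro m
    induction m with
    | zero => intro k hk hkn hm hA; omega
    | succ m IH =>
      intro k hk hkn hm hA
      by_contra hne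
      have hle : (π ⟨k, hk⟩ : ℕ) ≤ k := by
        have := adm ⟨k, hk⟩
        simp only at this
        omega
      set x := π⁻¹ ⟨k+1, by omega⟩ with hxd
      have hx : π x = ⟨k+1, by omega⟩ := by rw [hxd]; exact π.apply_symm_apply _
      have hxv : (x : ℕ) < n + 1 := x.2
      rcases lt_trichotomy (x : ℕ) k with h | h | h
      · have h2 := adm x
        have h3 : (π x : ℕ) = k + 1 := by rw [hx]
        omega
      · have hxk : x = ⟨k, hk⟩ := Fin.ext h
        rw [hxk] at hx
        have : (π ⟨k, hk⟩ : ℕ) = k + 1 := by rw [hx]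
        exact hne this
      · rcases lt_or_eq_of_le (by omega : (x : ℕ) + 1 ≤ n + 1) with h2 | h2
        · have h3 := IH (x : ℕ) x.2 (by omega) (by omega) (by omega)
          have h4 : (⟨(x : ℕ), x.2⟩ : Fin (n+1)) = x := Fin.ext rfl
          rw [h4, hx] at h3
          simp only at h3
          omega
        · have hxt : x = tt n := Fin.ext (by simpa using h2)
          rw [hxt] at hx
          have : (π (tt n) : ℕ) = k + 1 := by rw [hx]
          omega
  intro k h1 h2
  have := key n (k : ℕ) k.2 h2 (by omega) h1
  have h4 : (⟨(k : ℕ), k.2⟩ : Fin (n+1)) = k := Fin.ext rfl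
  rwa [h4] at this

lemma Ppred_low {π : Equiv.Perm (Fin (n+1))} (hP : Ppred π) {x : Fin (n+1)}
    (hx : (x : ℕ) < (π (tt n) : ℕ)) : (π x : ℕ) < (π (tt n) : ℕ) := by
  by_contra h
  push_neg at h
  rcases eq_or_lt_of_le h with hEq | hlt
  · have h2 : π x = π (tt n) := Fin.ext hEq.symm
    have h3 := π.injective h2
    rw [h3] at hx
    simp only [tt, Fin.val_last] at hx
    have := (π (tt n)).2
    omega
  · have hw : (π x : ℕ) < n + 1 := (π x).2
    have h3 := hP ⟨(π x : ℕ) - 1, by omega⟩ (by simp only; omega) (by simp only; omega)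
    have h4 : π ⟨(π x : ℕ) - 1, by omega⟩ = π x := Fin.ext (by simp only at h3 ⊢; omega)
    have h5 := π.injective h4
    have h6 : (π x : ℕ) - 1 = (x : ℕ) := by
      have := congrArg Fin.val h5
      simpa using this
    omega

lemma Ppred_low_inv {π : Equiv.Perm (Fin (n+1))} (hP : Ppred π) {y : Fin (n+1)}
    (hy : (y : ℕ) < (π (tt n) : ℕ)) : (π⁻¹ y : ℕ) < (π (tt n) : ℕ) := by
  by_contra h
  push_neg at h
  have hx : π (π⁻¹ y) = y := π.apply_symm_apply y
  rcases lt_or_eq_of_le (Nat.lt_succ_iff.mp (π⁻¹ y).2) with h2 | h2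
  · have h3 := hP (π⁻¹ y) h h2
    rw [hx] at h3
    omega
  · have hxt : π⁻¹ y = tt n := Fin.ext (by simpa using h2)
    rw [hxt] at hx
    rw [hx] at hy
    omega

/-- Restriction of a structured permutation below `π (tt n)`. -/
def restrM (π : Equiv.Perm (Fin (n+1))) (hP : Ppred π) :
    Equiv.Perm (Fin ((π (tt n) : ℕ))) where
  toFun j := ⟨(π ⟨(j : ℕ), lt_trans j.2 (π (tt n)).2⟩ : ℕ), Ppred_low hP j.2⟩
  invFun j := ⟨(π⁻¹ ⟨(j : ℕ), lt_trans j.2 (π (tt n)).2⟩ : ℕ), Ppred_low_inv hP j.2⟩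
  left_inv j := by
    refine Fin.ext ?_
    simp only
    have : (⟨(π ⟨(j : ℕ), _⟩ : ℕ), _⟩ : Fin (n+1)) = π ⟨(j : ℕ), lt_trans j.2 (π (tt n)).2⟩ :=
      Fin.ext rfl
    rw [this]; exact congrArg Fin.val (π.symm_apply_apply _)
  right_inv j := by
    refine Fin.ext ?_
    simp only
    have : (⟨(π⁻¹ ⟨(j : ℕ), _⟩ : ℕ), _⟩ : Fin (n+1)) = π⁻¹ ⟨(j : ℕ), lt_trans j.2 (π (tt n)).2⟩ :=
      Fin.ext rfl
    rw [this]; exact congrArg Fin.val (π.apply_symm_apply _)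

lemma sigEqM (x y : Σ a : Fin (n+1), Equiv.Perm (Fin (a : ℕ)))
    (h1 : x.1 = y.1)
    (h2 : ∀ k (hk : k < (x.1 : ℕ)) (hk' : k < (y.1 : ℕ)),
      (x.2 ⟨k, hk⟩ : ℕ) = (y.2 ⟨k, hk'⟩ : ℕ)) : x = y := by
  obtain ⟨a, ρ⟩ := x
  obtain ⟨a', ρ'⟩ := y
  simp only at h1
  subst h1
  simp only [Sigma.mk.inj_iff, heq_eq_eq, true_and]
  refine Equiv.ext fun z => ?_
  refine Fin.ext ?_
  have := h2 (z : ℕ) z.2 z.2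
  simpa using this


lemma FmatP_restr {π : Equiv.Perm (Fin (n+1))} (hP : Ppred π) :
    FmatP (π (tt n)) (restrM π hP) = π := by
  refine Equiv.ext fun x => ?_
  refine Fin.ext ?_
  by_cases hx1 : (x : ℕ) < (π (tt n) : ℕ)
  · rw [FmatP_low _ hx1]
    show (π ⟨(x : ℕ), lt_trans hx1 (π (tt n)).2⟩ : ℕ) = (π x : ℕ)
    exact congrArg (fun y => (π y : ℕ)) (Fin.ext rfl)
  · push_neg at hx1
    by_cases hx2 : (x : ℕ) < n
    · rw [FmatP_mid _ hx1 hx2, hP x hx1 hx2]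
    · have hxt : x = tt n := by
        refine Fin.ext ?_
        have := x.2
        simp only [tt, Fin.val_last]
        omega
      rw [hxt, FmatP_top]

lemma peelZ (n : ℕ) (φ : Multiset ℕ → MvPolynomial ℕ ℚ) :
    ∑ π : Equiv.Perm (Fin (n+1)), φ π.partition.parts * ∏ i, Zmat (n+1) i (π i)
      = ∑ a : Fin (n+1), (Nnum (a : ℕ) n : MvPolynomial ℕ ℚ) * X (n - (a : ℕ) + 1) *
          ∑ π' : Equiv.Perm (Fin (a : ℕ)),
            φ ((n - (a : ℕ) + 1) ::ₘ π'.partition.parts) * ∏ i, Zmat (a : ℕ) i (π' i) := by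
  classical
  have hvanish : ∀ π ∈ (Finset.univ : Finset (Equiv.Perm (Fin (n+1)))),
      φ π.partition.parts * ∏ i, Zmat (n+1) i (π i) ≠ 0 → Ppred π := by
    intro π _ hne
    apply adm_struct
    intro i
    by_contra hbad
    push_neg at hbad
    have hz : Zmat (n+1) i (π i) = 0 := by
      simp only [Zmat]
      rw [if_neg (by omega), if_neg (by omega)]
    exact hne (by rw [Finset.prod_eq_zero (Finset.mem_univ i) hz, mul_zero])
  rw [← Finset.sum_filter_of_ne hvanish]
  have hbij : ∑ π ∈ Finset.univ.filter Ppred,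
        φ π.partition.parts * ∏ i, Zmat (n+1) i (π i)
      = ∑ x : (Σ a : Fin (n+1), Equiv.Perm (Fin (a : ℕ))),
          φ (FmatP x.1 x.2).partition.parts * ∏ i, Zmat (n+1) i (FmatP x.1 x.2 i) := by
    refine Finset.sum_bij'
      (fun π hπ => (⟨π (tt n), restrM π (Finset.mem_filter.mp hπ).2⟩ :
        Σ a : Fin (n+1), Equiv.Perm (Fin (a : ℕ))))
      (fun x _ => FmatP x.1 x.2) ?_ ?_ ?_ ?_ ?_
    · intro π hπ
      exact Finset.mem_univ _
    · intro x _
      refine Finset.mem_filter.mpr ⟨Finset.mem_univ _, ?_⟩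
      intro k h1 h2
      rw [FmatP_top] at h1
      exact FmatP_mid x.2 h1 h2
    · intro π hπ
      exact FmatP_restr (Finset.mem_filter.mp hπ).2
    · rintro ⟨a, π'⟩ _
      refine sigEqM _ _ (Fin.ext (FmatP_top π')) ?_
      intro k hk hk'
      show ((FmatP a π') ⟨k, _⟩ : ℕ) = _
      exact FmatP_low π' hk'
    · intro π hπ
      rw [FmatP_restr (Finset.mem_filter.mp hπ).2]
  rw [hbij]
  have hterm : ∀ x : (Σ a : Fin (n+1), Equiv.Perm (Fin (a : ℕ))),
      φ (FmatP x.1 x.2).partition.parts * ∏ i, Zmat (n+1) i (FmatP x.1 x.2 i)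
        = (Nnum (x.1 : ℕ) n : MvPolynomial ℕ ℚ) * X (n - (x.1 : ℕ) + 1) *
            (φ ((n - (x.1 : ℕ) + 1) ::ₘ x.2.partition.parts)
              * ∏ i, Zmat (x.1 : ℕ) i (x.2 i)) := by
    intro x
    rw [FmatP_parts, FmatP_prod]
    ring
  rw [Fintype.sum_congr _ _ hterm, ← Finset.univ_sigma_univ, Finset.sum_sigma]
  refine Finset.sum_congr rfl (fun a _ => ?_)
  rw [Finset.mul_sum]

lemma mainZ : ∀ q : ℕ, ∀ φ : Multiset ℕ → MvPolynomial ℕ ℚ,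
    ∑ π : Equiv.Perm (Fin q), φ π.partition.parts * ∏ i, Zmat q i (π i)
      = ∑ π : Equiv.Perm (Fin q), φ π.partition.parts * ((π.partition.parts).map X).prod := by
  intro q
  induction q using Nat.strong_induction_on with
  | _ q IH =>
    match q, IH with
    | 0, _ =>
      intro φ
      refine Fintype.sum_congr _ _ (fun π => ?_)
      have h0 : π.partition.parts = 0 := by
        have hsum : π.partition.parts.sum = 0 := by
          simpa using π.partition.parts_sum
        by_contra hne
        obtain ⟨x, hx⟩ := Multiset.exists_mem_of_ne_zero hne
        have hpos := π.partition.parts_pos hx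
        have hle := Multiset.single_le_sum (fun y _ => Nat.zero_le y) x hx
        omega
      rw [h0]
      simp
    | (n+1), IH =>
      intro φ
      rw [peelZ n φ]
      have hinner : ∀ a : Fin (n+1),
          (Nnum (a : ℕ) n : MvPolynomial ℕ ℚ) * X (n - (a : ℕ) + 1) *
            (∑ π' : Equiv.Perm (Fin (a : ℕ)),
              φ ((n - (a : ℕ) + 1) ::ₘ π'.partition.parts) * ∏ i, Zmat (a : ℕ) i (π' i))
          = (Nnum (a : ℕ) n : MvPolynomial ℕ ℚ) * X (n - (a : ℕ) + 1) *
            (∑ π' : Equiv.Perm (Fin (a : ℕ)),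
              φ ((n - (a : ℕ) + 1) ::ₘ π'.partition.parts)
                * ((π'.partition.parts).map X).prod) := by
        intro a
        have h1 := IH (a : ℕ) a.2 (fun μ => φ ((n - (a : ℕ) + 1) ::ₘ μ))
        rw [h1]
      rw [Fintype.sum_congr _ _ hinner]
      have h3 := cyc_sum n (fun μ => φ μ * (μ.map X).prod)
      rw [h3]
      refine Finset.sum_congr rfl (fun a _ => ?_)
      have ha : (a : ℕ) ≤ n := by have := a.2; omega
      rw [nsmul_eq_mul, ← Nnum_eq_descFactorial ha, Finset.mul_sum, Finset.mul_sum]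
      refine Finset.sum_congr rfl (fun π' _ => ?_)
      rw [Multiset.map_cons, Multiset.prod_cons]
      ring

/-- The cycle-type partition of a permutation of `Fin q`. -/
def partOf {q : ℕ} (π : Equiv.Perm (Fin q)) : Nat.Partition q :=
  ⟨π.partition.parts, π.partition.parts_pos,
    (π.partition.parts_sum).trans (Fintype.card_fin q)⟩

end MatPeel

/-- Littlewood's formula: `im_β(Z) = Σ_{|γ|=q} d_γ · χ^γ_β · ζ^γ`. -/
theorem littlewood_formula (q : ℕ) (b : Nat.Partition q) :
    immanant b (Zmat q) =
      ∑ g : Nat.Partition q, (numOfCycleType q g : MvPolynomial ℕ ℚ) *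
        (symCharMu b g.parts : MvPolynomial ℕ ℚ) * (g.parts.map X).prod := by
  classical
  have hmain := mainZ q (fun μ => ((symCharMu b μ : ℤ) : MvPolynomial ℕ ℚ))
  have hL : immanant b (Zmat q) = ∑ π : Equiv.Perm (Fin q),
      ((symCharMu b π.partition.parts : ℤ) : MvPolynomial ℕ ℚ) * ∏ i, Zmat q i (π i) := rfl
  rw [hL, hmain]
  -- now compute the right-hand side as a fiberwise sum
  have hcount : ∀ g : Nat.Partition q,
      (numOfCycleType q g : MvPolynomial ℕ ℚ) * (symCharMu b g.parts : MvPolynomial ℕ ℚ)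
          * (g.parts.map X).prod
        = ∑ π ∈ Finset.univ.filter (fun π : Equiv.Perm (Fin q) => partOf π = g),
            ((symCharMu b π.partition.parts : ℤ) : MvPolynomial ℕ ℚ)
              * ((π.partition.parts.map X).prod) := by
    intro g
    have hfilter : Finset.univ.filter (fun π : Equiv.Perm (Fin q) => partOf π = g)
        = Finset.univ.filter (fun π : Equiv.Perm (Fin q) => π.partition.parts = g.parts) := by
      refine Finset.filter_congr (fun π _ => ?_)
      constructor
      · intro h
        rw [← h]
        rfl
      · intro h
        exact Nat.Partition.ext h
    have hnum : (numOfCycleType q g : ℕ)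
        = (Finset.univ.filter (fun π : Equiv.Perm (Fin q) => partOf π = g)).card := by
      rw [numOfCycleType, Nat.card_eq_fintype_card, Fintype.card_subtype, hfilter]
    have hsum : ∀ π ∈ Finset.univ.filter (fun π : Equiv.Perm (Fin q) => partOf π = g),
        ((symCharMu b π.partition.parts : ℤ) : MvPolynomial ℕ ℚ)
            * ((π.partition.parts.map X).prod)
          = (symCharMu b g.parts : MvPolynomial ℕ ℚ) * ((g.parts.map X).prod) := by
      intro π hπ
      have h2 : π.partition.parts = g.parts := by
        have := (Finset.mem_filter.mp hπ).2
        rw [← this]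
        rfl
      rw [h2]
    rw [Finset.sum_congr rfl hsum, Finset.sum_const, hnum, nsmul_eq_mul, mul_assoc]
  rw [Fintype.sum_congr _ _ hcount]
  have hfib := Finset.sum_fiberwise_eq_sum_filter Finset.univ Finset.univ
    (fun π : Equiv.Perm (Fin q) => partOf π)
    (fun π : Equiv.Perm (Fin q) =>
      ((symCharMu b π.partition.parts : ℤ) : MvPolynomial ℕ ℚ)
        * ((π.partition.parts.map X).prod))
  rw [hfib, Finset.filter_true_of_mem (fun _ _ => Finset.mem_univ _)]
end

section
/- For a permutation π of cycle type γ = (γ_1,…,γ_r) whose diagonal product Π_i Z_{i,π(i)} (for the matrix Z with Z_{i,j}=ζ_{i-j+1} for j≤i, Z_{i,i+1}=i, else 0) is nonzero, each cycle of π must be an interval cycle of the form (i+1, i+2, …, i+s), and π corresponds to an ordered composition j = (j_1,…,j_r) that is a rearrangement of (γ_1,…,γ_r) with diagonal product equal to (q!/φ(j)) · ζ^γ, where φ(j) = j_1(j_1+j_2)···(j_1+⋯+j_r) and j_1+⋯+j_r = q. -/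
open Equiv MvPolynomial

/-- `φ(j) = j₁(j₁+j₂)⋯(j₁+⋯+j_r)`, the product of the partial sums of `j`. -/
def phi (j : List ℕ) : ℕ := ((List.range j.length).map (fun i => (j.take (i + 1)).sum)).prod

/-- `σ` is the interval cycle `(a+1, a+2, …, a+s)` (1-indexed), i.e. it cyclically permutes
an interval of length `s` by `x ↦ x + 1` and fixes everything else. -/
def IsIntervalCycle {q : ℕ} (σ : Equiv.Perm (Fin q)) : Prop :=
  ∃ a s : ℕ, 0 < s ∧ a + s ≤ q ∧
    (∀ x : Fin q, ((x : ℕ) < a ∨ a + s ≤ (x : ℕ)) → σ x = x) ∧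
    (∀ x : Fin q, a ≤ (x : ℕ) → (x : ℕ) + 1 < a + s → (σ x : ℕ) = (x : ℕ) + 1) ∧
    (∀ x : Fin q, (x : ℕ) + 1 = a + s → (σ x : ℕ) = a)

namespace DPZAux

variable {q : ℕ}

/-- A forward-invariant finset is invariant under the whole cycle. -/
lemma mem_of_sameCycle_invariant (f : Equiv.Perm (Fin q)) (S : Finset (Fin q))
    (hS : ∀ x ∈ S, f x ∈ S) {x y : Fin q} (hx : x ∈ S) (hxy : f.SameCycle x y) : y ∈ S := by
  have himg : S.image f = S := by
    apply Finset.eq_of_subset_of_card_le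
    · intro y hy
      obtain ⟨z, hz, rfl⟩ := Finset.mem_image.1 hy
      exact hS z hz
    · rw [Finset.card_image_of_injective _ f.injective]
  have hinv : ∀ z ∈ S, f⁻¹ z ∈ S := by
    intro z hz
    rw [← himg] at hz
    obtain ⟨w, hw, rfl⟩ := Finset.mem_image.1 hz
    simpa using hw
  have hpow : ∀ n : ℕ, ∀ z ∈ S, (f ^ n) z ∈ S := by
    intro n
    induction n with
    | zero => simp
    | succ n ih =>
      intro z hz
      rw [pow_succ, Equiv.Perm.mul_apply]
      exact ih _ (hS z hz)
  have hpow' : ∀ n : ℕ, ∀ z ∈ S, (f⁻¹ ^ n) z ∈ S := by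
    intro n
    induction n with
    | zero => simp
    | succ n ih =>
      intro z hz
      rw [pow_succ, Equiv.Perm.mul_apply]
      exact ih _ (hinv z hz)
  obtain ⟨n, rfl⟩ := hxy
  rcases n with n | n
  · rw [Int.ofNat_eq_coe, zpow_natCast]
    exact hpow n x hx
  · rw [zpow_negSucc, ← inv_pow]
    exact hpow' (n + 1) x hx

variable (π : Equiv.Perm (Fin q))
variable (hstep : ∀ i : Fin q, (π i : ℕ) ≤ i ∨ (π i : ℕ) = (i : ℕ) + 1)

include hstep

/-- If `k` is a down step, `{x : x ≤ k}` is invariant. -/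
lemma invariant_le (k : Fin q) (hk : (π k : ℕ) ≤ k) :
    ∀ x : Fin q, (x : ℕ) ≤ k → (π x : ℕ) ≤ k := by
  intro x hx
  rcases hstep x with h | h
  · exact le_trans h hx
  · rcases lt_or_eq_of_le hx with hx' | hx'
    · omega
    · have : x = k := Fin.ext hx'
      subst this
      omega

lemma sameCycle_le (k : Fin q) (hk : (π k : ℕ) ≤ k) {x y : Fin q}
    (hx : (x : ℕ) ≤ k) (hxy : π.SameCycle x y) : (y : ℕ) ≤ k := by
  have := mem_of_sameCycle_invariant π (Finset.univ.filter fun z => (z : ℕ) ≤ (k : ℕ))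
    (by intro z hz
        simp only [Finset.mem_filter, Finset.mem_univ, true_and] at hz ⊢
        exact invariant_le π hstep k hk z hz)
    (by simp only [Finset.mem_filter, Finset.mem_univ, true_and]; exact hx) hxy
  simpa using this

/-- Strictly between the bottom and a down step `d`, every point is an up step. -/
lemma up_of_between (d : Fin q) (hd : (π d : ℕ) ≤ d) (y : Fin q)
    (h1 : (π d : ℕ) ≤ y) (h2 : (y : ℕ) < d) : (π y : ℕ) = (y : ℕ) + 1 := by
  rcases hstep y with hy | hy
  · exfalso
    have hcyc : π.SameCycle (π d) d := ⟨-1, by simp⟩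
    have := sameCycle_le π hstep y hy h1 hcyc
    omega
  · exact hy

lemma pow_apply_of_down (d : Fin q) (hd : (π d : ℕ) ≤ d) :
    ∀ m : ℕ, m ≤ (d : ℕ) - (π d : ℕ) → ((π ^ m) (π d) : ℕ) = (π d : ℕ) + m := by
  intro m
  induction m with
  | zero => simp
  | succ m ih =>
    intro hm
    have hz := ih (by omega)
    rw [pow_succ', Equiv.Perm.mul_apply]
    have h1 : (π d : ℕ) ≤ ((π ^ m) (π d) : ℕ) := by omega
    have h2 : (((π ^ m) (π d)) : ℕ) < d := by omega
    rw [up_of_between π hstep d hd _ h1 h2, hz]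
    omega

/-- The cycle of a down step `d` is exactly the interval `[π d, d]`. -/
lemma sameCycle_iff_interval (d : Fin q) (hd : (π d : ℕ) ≤ d) (y : Fin q) :
    π.SameCycle d y ↔ ((π d : ℕ) ≤ y ∧ (y : ℕ) ≤ d) := by
  constructor
  · intro hxy
    refine ⟨?_, sameCycle_le π hstep d hd le_rfl hxy⟩
    have := mem_of_sameCycle_invariant π
      (Finset.univ.filter fun z => (π d : ℕ) ≤ (z : ℕ) ∧ (z : ℕ) ≤ (d : ℕ))
      (by intro z hz
          simp only [Finset.mem_filter, Finset.mem_univ, true_and] at hz ⊢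
          rcases lt_or_eq_of_le hz.2 with h | h
          · have := up_of_between π hstep d hd z hz.1 h
            omega
          · have : z = d := Fin.ext h
            subst this
            omega)
      (by simp only [Finset.mem_filter, Finset.mem_univ, true_and]; omega) hxy
    simp only [Finset.mem_filter] at this
    exact this.2.1
  · rintro ⟨h1, h2⟩
    have h3 := pow_apply_of_down π hstep d hd ((y : ℕ) - (π d : ℕ)) (by omega)
    have h4 : (π ^ ((y : ℕ) - (π d : ℕ))) (π d) = y := Fin.ext (by omega)
    have h5 : π.SameCycle (π d) y := ⟨((y : ℕ) - (π d : ℕ) : ℕ), by rw [zpow_natCast]; exact h4⟩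
    exact Equiv.Perm.SameCycle.trans (show π.SameCycle d (π d) from ⟨1, by simp⟩) h5

/-- Each cycle contains at most one down step. -/
lemma down_unique {d₁ d₂ : Fin q} (h1 : (π d₁ : ℕ) ≤ d₁) (h2 : (π d₂ : ℕ) ≤ d₂)
    (h : π.SameCycle d₁ d₂) : d₁ = d₂ := by
  wlog hle : (d₁ : ℕ) ≤ (d₂ : ℕ) generalizing d₁ d₂
  · exact (this h2 h1 h.symm (by omega)).symm
  rcases lt_or_eq_of_le hle with hlt | heq
  · have hbot := ((sameCycle_iff_interval π hstep d₂ h2 d₁).1 h.symm).1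
    have := up_of_between π hstep d₂ h2 d₁ hbot hlt
    omega
  · exact Fin.ext heq

/-- Every point lies in the interval of some down step. -/
lemma down_exists (x : Fin q) :
    ∃ d : Fin q, (π d : ℕ) ≤ d ∧ (π d : ℕ) ≤ x ∧ (x : ℕ) ≤ d := by
  have hq : 0 < q := x.pos
  set T : Finset (Fin q) := Finset.univ.filter fun e => (π e : ℕ) ≤ e ∧ (x : ℕ) ≤ e with hT
  have hTne : T.Nonempty := by
    refine ⟨⟨q - 1, by omega⟩, ?_⟩
    simp only [hT, Finset.mem_filter, Finset.mem_univ, true_and]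
    constructor
    · have := (π ⟨q - 1, by omega⟩).isLt
      omega
    · have := x.isLt
      omega
  set d := T.min' hTne with hdd
  have hdT : d ∈ T := T.min'_mem hTne
  simp only [hT, Finset.mem_filter, Finset.mem_univ, true_and] at hdT
  refine ⟨d, hdT.1, ?_, hdT.2⟩
  by_contra hcon
  push_neg at hcon
  have he1 : (π d : ℕ) - 1 < q := by have := d.isLt; omega
  set e : Fin q := ⟨(π d : ℕ) - 1, he1⟩ with hee
  have heval : (e : ℕ) = (π d : ℕ) - 1 := rfl
  have hed : (e : ℕ) < d := by omega
  have hedown : (π e : ℕ) ≤ e := by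
    rcases hstep e with h | h
    · exact h
    · exfalso
      have h1 : (π e : ℕ) = (π d : ℕ) := by omega
      have h2 : e = d := π.injective (Fin.ext h1)
      omega
  have heT : e ∈ T := by
    simp only [hT, Finset.mem_filter, Finset.mem_univ, true_and]
    exact ⟨hedown, by omega⟩
  have := T.min'_le e heT
  rw [← hdd] at this
  have : (d : ℕ) ≤ e := this
  omega

/-- Down step with nonzero image has a predecessor down step at `π d - 1`,
which dominates all smaller down steps. -/
lemma prev_down (d : Fin q) (hd : (π d : ℕ) ≤ d) (h0 : (π d : ℕ) ≠ 0) :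
    ∃ e : Fin q, (π e : ℕ) ≤ e ∧ (e : ℕ) + 1 = (π d : ℕ) ∧
      ∀ e' : Fin q, (π e' : ℕ) ≤ e' → (e' : ℕ) < d → (e' : ℕ) ≤ e := by
  have he1 : (π d : ℕ) - 1 < q := by have := d.isLt; omega
  set e : Fin q := ⟨(π d : ℕ) - 1, he1⟩ with hee
  have heval : (e : ℕ) = (π d : ℕ) - 1 := rfl
  have hed : (e : ℕ) < d := by omega
  have hedown : (π e : ℕ) ≤ e := by
    rcases hstep e with h | h
    · exact h
    · exfalso
      have h1 : (π e : ℕ) = (π d : ℕ) := by omega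
      have h2 : e = d := π.injective (Fin.ext h1)
      omega
  refine ⟨e, hedown, by omega, ?_⟩
  intro e' he' hlt
  by_contra hcon
  push_neg at hcon
  have hb : (π d : ℕ) ≤ e' := by omega
  have := up_of_between π hstep d hd e' hb hlt
  omega


lemma isIntervalCycle_of_mem (σ : Equiv.Perm (Fin q)) (hσ : σ ∈ π.cycleFactorsFinset) :
    IsIntervalCycle σ := by
  have hmem := Equiv.Perm.mem_cycleFactorsFinset_iff.1 hσ
  obtain ⟨x, hx, -⟩ := hmem.1
  have hxsupp : x ∈ σ.support := Equiv.Perm.mem_support.2 hx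
  have hπx : π x ≠ x := by rw [← hmem.2 x hxsupp]; exact hx
  obtain ⟨d, hd, hdx1, hdx2⟩ := down_exists π hstep x
  have hsc : π.SameCycle d x := (sameCycle_iff_interval π hstep d hd x).2 ⟨hdx1, hdx2⟩
  have hdlt : (π d : ℕ) < d := by
    rcases lt_or_eq_of_le hd with h | h
    · exact h
    · exfalso
      have hxd : x = d := Fin.ext (by omega)
      subst hxd
      exact hπx (Fin.ext (by omega))
  have hdsupp : d ∈ π.support := Equiv.Perm.mem_support.2 (by
    intro h
    rw [h] at hdlt
    omega)
  have hσeq : σ = π.cycleOf d := by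
    rw [Equiv.Perm.cycle_is_cycleOf hxsupp hσ]
    exact (Equiv.Perm.SameCycle.cycleOf_eq hsc).symm
  have hsupp : ∀ y : Fin q, y ∈ σ.support ↔ ((π d : ℕ) ≤ y ∧ (y : ℕ) ≤ d) := by
    intro y
    rw [hσeq, Equiv.Perm.mem_support_cycleOf_iff]
    constructor
    · intro h
      exact (sameCycle_iff_interval π hstep d hd y).1 h.1
    · intro h
      exact ⟨(sameCycle_iff_interval π hstep d hd y).2 h, hdsupp⟩
  refine ⟨(π d : ℕ), (d : ℕ) - (π d : ℕ) + 1, by omega, by have := d.isLt; omega, ?_, ?_, ?_⟩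
  · intro y hy
    have hns : y ∉ σ.support := by rw [hsupp]; omega
    exact Equiv.Perm.notMem_support.1 hns
  · intro y h1 h2
    have hys : y ∈ σ.support := by rw [hsupp]; omega
    rw [hmem.2 y hys]
    exact up_of_between π hstep d hd y h1 (by omega)
  · intro y hy
    have hyd : y = d := Fin.ext (by omega)
    subst hyd
    have hys : y ∈ σ.support := by rw [hsupp]; omega
    rw [hmem.2 y hys]


lemma phi_eq :
    phi (((Finset.univ.filter fun i : Fin q => (π i : ℕ) ≤ i).sort (· ≤ ·)).map
        (fun i : Fin q => (i : ℕ) - (π i : ℕ) + 1)) =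
      ∏ i ∈ (Finset.univ.filter fun i : Fin q => (π i : ℕ) ≤ i), ((i : ℕ) + 1) := by
  classical
  set D : Finset (Fin q) := Finset.univ.filter fun i : Fin q => (π i : ℕ) ≤ i with hD
  set dl : List (Fin q) := D.sort (· ≤ ·) with hdl
  set len : Fin q → ℕ := fun i => (i : ℕ) - (π i : ℕ) + 1 with hlen
  have hsorted : dl.Pairwise (· < ·) := (Finset.sortedLT_sort D).pairwise
  have hmem_dl : ∀ {e : Fin q}, e ∈ dl ↔ (π e : ℕ) ≤ e := by
    intro e
    rw [hdl, Finset.mem_sort]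
    simp [hD]
  have hmono : ∀ (s t : ℕ) (hs : s < dl.length) (ht : t < dl.length), s < t →
      (dl[s] : ℕ) < (dl[t] : ℕ) := by
    intro s t hs ht hst
    exact hsorted.rel_get_of_lt (a := ⟨s, hs⟩) (b := ⟨t, ht⟩) hst
  have hdown : ∀ (t : ℕ) (ht : t < dl.length), (π dl[t] : ℕ) ≤ dl[t] := by
    intro t ht
    exact hmem_dl.1 (List.getElem_mem ht)
  have hmax : ∀ (e : Fin q), (π e : ℕ) ≤ e → ∀ (t : ℕ) (ht : t < dl.length),
      (e : ℕ) < dl[t] → ∃ s : ℕ, ∃ hs : s < dl.length, s < t ∧ e = dl[s] := by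
    intro e he t ht hlt
    obtain ⟨⟨s, hs⟩, hse0⟩ := List.mem_iff_get.1 (hmem_dl.2 he)
    have hse : dl[s]'hs = e := hse0
    refine ⟨s, hs, ?_, hse.symm⟩
    by_contra hcon
    push_neg at hcon
    rcases lt_or_eq_of_le hcon with h | h
    · have := hmono t s ht hs h
      omega
    · subst h
      omega
  have hget0 : ∀ h0 : 0 < dl.length, (π dl[0] : ℕ) = 0 := by
    intro h0
    by_contra hcon
    obtain ⟨e, he1, he2, -⟩ := prev_down π hstep dl[0] (hdown 0 h0) hcon
    have helt : (e : ℕ) < dl[0] := by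
      have := hdown 0 h0
      omega
    obtain ⟨s, hs, hslt, -⟩ := hmax e he1 0 h0 helt
    omega
  have hprev : ∀ (t : ℕ) (ht : t + 1 < dl.length),
      (π dl[t + 1] : ℕ) = (dl[t]'(by omega) : ℕ) + 1 := by
    intro t ht
    have ht' : t < dl.length := by omega
    have hdt : (dl[t]'ht' : ℕ) < dl[t + 1] := hmono t (t + 1) ht' ht (by omega)
    have hd1 := hdown (t + 1) ht
    by_cases h0 : (π dl[t + 1] : ℕ) = 0
    · exfalso
      have := up_of_between π hstep dl[t + 1] hd1 (dl[t]'ht') (by omega) hdt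
      have := hdown t ht'
      omega
    · obtain ⟨e, he1, he2, he3⟩ := prev_down π hstep dl[t + 1] hd1 h0
      have h4 : (dl[t]'ht' : ℕ) ≤ e := he3 (dl[t]'ht') (hdown t ht') hdt
      have helt : (e : ℕ) < dl[t + 1] := by omega
      obtain ⟨s, hs, hslt, hse⟩ := hmax e he1 (t + 1) ht helt
      have h5 : (e : ℕ) ≤ dl[t]'ht' := by
        subst hse
        rcases lt_or_eq_of_le (Nat.lt_succ_iff.1 hslt) with h | h
        · exact le_of_lt (hmono s t hs ht' h)
        · subst h
          exact le_refl _
      omega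
  have hC1 : ∀ (t : ℕ) (ht : t < dl.length),
      ((dl.map len).take (t + 1)).sum = (dl[t] : ℕ) + 1 := by
    intro t
    induction t with
    | zero =>
      intro ht
      rw [List.sum_take_succ _ 0 (by simpa using ht)]
      simp only [List.take_zero, List.sum_nil, List.getElem_map, Nat.zero_add]
      have := hget0 ht
      have := hdown 0 ht
      simp only [hlen]
      omega
    | succ t ih =>
      intro ht
      have ht' : t < dl.length := by omega
      rw [List.sum_take_succ _ (t + 1) (by simpa using ht), ih ht']
      simp only [List.getElem_map]
      have h1 := hprev t ht
      have h2 := hmono t (t + 1) ht' ht (by omega)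
      have h3 := hdown (t + 1) ht
      simp only [hlen]
      omega
  have hlist : (List.range dl.length).map (fun i => (((dl.map len).take (i + 1)).sum)) =
      dl.map (fun x : Fin q => (x : ℕ) + 1) := by
    apply List.ext_getElem
    · simp
    · intro i h1 h2
      simp only [List.getElem_map, List.getElem_range]
      exact hC1 i (by simpa using h1)
  show phi (dl.map len) = _
  rw [phi, List.length_map, hlist]
  rw [Finset.prod_eq_multiset_prod, ← Finset.sort_eq D (· ≤ ·), ← hdl,
    Multiset.map_coe, Multiset.prod_coe]

lemma parts_eq :
    π.partition.parts =
      (Finset.univ.filter fun i : Fin q => (π i : ℕ) ≤ i).val.map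
        (fun i : Fin q => (i : ℕ) - (π i : ℕ) + 1) := by
  classical
  set len : Fin q → ℕ := fun i => (i : ℕ) - (π i : ℕ) + 1 with hlen
  set D1 : Finset (Fin q) := Finset.univ.filter fun i : Fin q => π i = i with hD1
  set D2 : Finset (Fin q) := Finset.univ.filter fun i : Fin q => (π i : ℕ) < i with hD2
  have hdisj : Disjoint D1 D2 := by
    rw [Finset.disjoint_left]
    intro a h1 h2
    simp only [hD1, hD2, Finset.mem_filter, Finset.mem_univ, true_and] at h1 h2
    rw [h1] at h2
    omega
  have hsplit : (Finset.univ.filter fun i : Fin q => (π i : ℕ) ≤ i) = D1.disjUnion D2 hdisj := by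
    ext a
    simp only [Finset.disjUnion_eq_union, Finset.mem_union, hD1, hD2, Finset.mem_filter,
      Finset.mem_univ, true_and]
    constructor
    · intro h
      rcases lt_or_eq_of_le h with h' | h'
      · exact Or.inr h'
      · exact Or.inl (Fin.ext h')
    · rintro (h | h)
      · rw [h]
      · omega
  have hD2fact : D2.image π.cycleOf = π.cycleFactorsFinset := by
    ext σ
    simp only [Finset.mem_image]
    constructor
    · rintro ⟨d, hd, rfl⟩
      simp only [hD2, Finset.mem_filter, Finset.mem_univ, true_and] at hd
      refine Equiv.Perm.cycleOf_mem_cycleFactorsFinset_iff.2 (Equiv.Perm.mem_support.2 ?_)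
      intro h
      rw [h] at hd
      omega
    · intro hσ
      have hmem := Equiv.Perm.mem_cycleFactorsFinset_iff.1 hσ
      obtain ⟨x, hx, -⟩ := hmem.1
      have hxsupp : x ∈ σ.support := Equiv.Perm.mem_support.2 hx
      have hπx : π x ≠ x := by rw [← hmem.2 x hxsupp]; exact hx
      obtain ⟨d, hdn, hdx1, hdx2⟩ := down_exists π hstep x
      have hsc : π.SameCycle d x := (sameCycle_iff_interval π hstep d hdn x).2 ⟨hdx1, hdx2⟩
      have hdlt : (π d : ℕ) < d := by
        rcases lt_or_eq_of_le hdn with h | h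
        · exact h
        · exfalso
          have hxd : x = d := Fin.ext (by omega)
          subst hxd
          exact hπx (Fin.ext (by omega))
      refine ⟨d, by simp only [hD2, Finset.mem_filter, Finset.mem_univ, true_and]; exact hdlt, ?_⟩
      rw [Equiv.Perm.cycle_is_cycleOf hxsupp hσ]
      exact hsc.cycleOf_eq
  have hinj : Set.InjOn π.cycleOf (D2 : Set (Fin q)) := by
    intro d1 h1 d2 h2 heq
    simp only [Finset.coe_filter, Set.mem_setOf_eq, hD2, Finset.mem_coe, Finset.mem_filter,
      Finset.mem_univ, true_and] at h1 h2
    have hsupp2 : d2 ∈ π.support := Equiv.Perm.mem_support.2 (by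
      intro h
      rw [h] at h2
      omega)
    have hmem2 : d2 ∈ (π.cycleOf d1).support := by
      rw [heq, Equiv.Perm.mem_support_cycleOf_iff]
      exact ⟨Equiv.Perm.SameCycle.refl _ _, hsupp2⟩
    rw [Equiv.Perm.mem_support_cycleOf_iff] at hmem2
    exact down_unique π hstep (le_of_lt h1) (le_of_lt h2) hmem2.1
  have hval : π.cycleFactorsFinset.val = D2.val.map π.cycleOf := by
    rw [← hD2fact, Finset.image_val_of_injOn hinj]
  have hcycType : π.cycleType = D2.val.map len := by
    show π.cycleFactorsFinset.val.map (Finset.card ∘ Equiv.Perm.support) = _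
    rw [hval, Multiset.map_map]
    apply Multiset.map_congr rfl
    intro d hd
    have hdn : (π d : ℕ) < d := by
      have := Finset.mem_val.mp hd
      simp only [hD2, Finset.mem_filter, Finset.mem_univ, true_and] at this
      exact this
    have hsupp : (π.cycleOf d).support = Finset.Icc (π d) d := by
      ext y
      rw [Equiv.Perm.mem_support_cycleOf_iff, Finset.mem_Icc]
      have hds : d ∈ π.support := Equiv.Perm.mem_support.2 (by
        intro h
        rw [h] at hdn
        omega)
      constructor
      · intro h
        have hb := (sameCycle_iff_interval π hstep d (le_of_lt hdn) y).1 h.1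
        exact ⟨by rw [Fin.le_def]; exact hb.1, by rw [Fin.le_def]; exact hb.2⟩
      · intro h
        rw [Fin.le_def, Fin.le_def] at h
        exact ⟨(sameCycle_iff_interval π hstep d (le_of_lt hdn) y).2 h, hds⟩
    simp only [Function.comp_apply, hsupp, Fin.card_Icc, hlen]
    omega
  have hD1card : D1.card = q - π.support.card := by
    have hcompl : D1 = π.supportᶜ := by
      ext a
      simp [hD1, Equiv.Perm.mem_support, not_not]
    rw [hcompl, Finset.card_compl, Fintype.card_fin]
  have hD1map : D1.val.map len = Multiset.replicate (q - π.support.card) 1 := by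
    rw [← hD1card, Multiset.eq_replicate]
    constructor
    · rw [Multiset.card_map]
      rfl
    · intro b hb
      obtain ⟨a, ha, rfl⟩ := Multiset.mem_map.1 hb
      have hfix : π a = a := by
        have := Finset.mem_val.mp ha
        simp only [hD1, Finset.mem_filter, Finset.mem_univ, true_and] at this
        exact this
      simp only [hlen, hfix]
      omega
  have hdval : (D1.disjUnion D2 hdisj).val = D1.val + D2.val := rfl
  rw [hsplit, hdval, Multiset.map_add, Equiv.Perm.parts_partition,
    Fintype.card_fin, hcycType, hD1map]
  exact add_comm _ _

end DPZAux

/-- If `π` has cycle type `γ` and nonzero diagonal product in `Z`, then all its cycles are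
interval cycles and `π` yields a rearrangement `j` of `γ` with
`∏ᵢ Z_{i,π(i)} = (q!/φ(j)) · ζ^γ`. -/
theorem diagonal_product_Zmat (q : ℕ) (g : Nat.Partition q) (π : Equiv.Perm (Fin q))
    (hcyc : π.partition.parts = g.parts) (hne : (∏ i, Zmat q i (π i)) ≠ 0) :
    (∀ σ ∈ π.cycleFactorsFinset, IsIntervalCycle σ) ∧
      ∃ j : List ℕ, (j : Multiset ℕ) = g.parts ∧
        (∏ i, Zmat q i (π i)) =
          C ((q.factorial : ℚ) / (phi j : ℚ)) * (g.parts.map X).prod := by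
  classical
  have hstep : ∀ i : Fin q, (π i : ℕ) ≤ i ∨ (π i : ℕ) = (i : ℕ) + 1 := by
    intro i
    by_contra hcon
    push_neg at hcon
    refine Finset.prod_ne_zero_iff.1 hne i (Finset.mem_univ i) ?_
    simp only [Zmat]
    rw [if_neg (by omega), if_neg hcon.2]
  set D : Finset (Fin q) := Finset.univ.filter fun i : Fin q => (π i : ℕ) ≤ i with hD
  set len : Fin q → ℕ := fun i => (i : ℕ) - (π i : ℕ) + 1 with hlen
  have hparts : g.parts = D.val.map len := by
    rw [← hcyc]
    exact DPZAux.parts_eq π hstep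
  refine ⟨fun σ hσ => DPZAux.isIntervalCycle_of_mem π hstep σ hσ,
    (D.sort (· ≤ ·)).map len, ?_, ?_⟩
  · rw [hparts, ← Finset.sort_eq D (· ≤ ·)]
    exact (Multiset.map_coe _ _).symm
  · have hsplit := (Finset.prod_mul_prod_compl D fun i => Zmat q i (π i)).symm
    have hDprod : ∏ i ∈ D, Zmat q i (π i) = ∏ i ∈ D, X (len i) := by
      apply Finset.prod_congr rfl
      intro i hi
      have hii : (π i : ℕ) ≤ i := by simpa [hD] using hi
      simp only [Zmat, hlen]
      rw [if_pos hii]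
    have hCprod : ∏ i ∈ Dᶜ, Zmat q i (π i) = C ((∏ i ∈ Dᶜ, ((i : ℕ) + 1) : ℕ) : ℚ) := by
      rw [Nat.cast_prod, map_prod]
      apply Finset.prod_congr rfl
      intro i hi
      have hii : ¬ (π i : ℕ) ≤ i := by
        have := Finset.mem_compl.1 hi
        simpa [hD] using this
      have hup : (π i : ℕ) = (i : ℕ) + 1 := (hstep i).resolve_left hii
      simp only [Zmat]
      rw [if_neg hii, if_pos hup, map_natCast C ((i : ℕ) + 1)]
      push_cast
      ring
    have hfact : (∏ i ∈ D, ((i : ℕ) + 1)) * (∏ i ∈ Dᶜ, ((i : ℕ) + 1)) = q.factorial := by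
      rw [Finset.prod_mul_prod_compl, Fin.prod_univ_eq_prod_range (fun i => i + 1) q]
      exact Finset.prod_range_add_one_eq_factorial q
    have hphi : phi ((D.sort (· ≤ ·)).map len) = ∏ i ∈ D, ((i : ℕ) + 1) :=
      DPZAux.phi_eq π hstep
    have hphipos : 0 < ∏ i ∈ D, ((i : ℕ) + 1) :=
      Finset.prod_pos fun i _ => Nat.succ_pos _
    have hscal : ((q.factorial : ℚ) / (phi ((D.sort (· ≤ ·)).map len) : ℚ))
        = ((∏ i ∈ Dᶜ, ((i : ℕ) + 1) : ℕ) : ℚ) := by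
      rw [hphi, ← hfact, Nat.cast_mul, mul_comm, mul_div_assoc,
        div_self (Nat.cast_ne_zero.2 (by omega)), mul_one]
    rw [hsplit, hDprod, hCprod, hscal, hparts, Multiset.map_map, ← Finset.prod_eq_multiset_prod]
    exact mul_comm _ _
end

section
/- Fix a sequence j = (j_1,…,j_r) of positive integers with j_1+⋯+j_r = q. The number of words w = w_1⋯w_q that are permutations of (1,2,…,q) and satisfy w_k = max{w_1,…,w_k} for every k in {j_1, j_1+j_2, …, j_1+⋯+j_r} equals q!/φ(j), where φ(j) = j_1(j_1+j_2)⋯(j_1+⋯+j_r). -/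
open Equiv MvPolynomial

section RunningMax

/-- The running-maximum condition at the positions recorded in `P` (1-indexed). -/
private def Cond (q : ℕ) (P : Finset ℕ) (w : Equiv.Perm (Fin q)) : Prop :=
  ∀ m2 : Fin q, ((m2 : ℕ) + 1 ∈ P) → ∀ m1, m1 ≤ m2 → w m1 ≤ w m2

/-- Insert value `v` at the last position, shifting `σ`'s values order-preservingly. -/
private def ins {q : ℕ} (v : Fin (q + 1)) (σ : Equiv.Perm (Fin q)) :
    Equiv.Perm (Fin (q + 1)) :=
  (finSuccEquiv' (Fin.last q)).trans ((Equiv.optionCongr σ).trans (finSuccEquiv' v).symm)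

private lemma ins_last {q : ℕ} (v : Fin (q + 1)) (σ : Equiv.Perm (Fin q)) :
    ins v σ (Fin.last q) = v := by
  simp [ins, finSuccEquiv'_at, finSuccEquiv'_symm_none]

private lemma ins_castSucc {q : ℕ} (v : Fin (q + 1)) (σ : Equiv.Perm (Fin q)) (k : Fin q) :
    ins v σ (Fin.castSucc k) = v.succAbove (σ k) := by
  have h1 : (finSuccEquiv' (Fin.last q)) (Fin.castSucc k) = some k := by
    rw [← Fin.succAbove_last, finSuccEquiv'_succAbove]
  simp [ins, h1, finSuccEquiv'_symm_some]

private lemma ins_bijective (q : ℕ) :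
    Function.Bijective (fun p : Fin (q + 1) × Equiv.Perm (Fin q) => ins p.1 p.2) := by
  rw [Fintype.bijective_iff_injective_and_card]
  constructor
  · rintro ⟨v, σ⟩ ⟨v', σ'⟩ h
    simp only at h
    have hv : v = v' := by
      have := congrArg (fun w : Equiv.Perm (Fin (q + 1)) => w (Fin.last q)) h
      simpa [ins_last] using this
    subst hv
    have hσ : σ = σ' := by
      ext k
      have := congrArg (fun w : Equiv.Perm (Fin (q + 1)) => w (Fin.castSucc k)) h
      simp only [ins_castSucc] at this
      have := Fin.succAbove_right_injective this
      simp [this]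
    simp [hσ]
  · simp [Fintype.card_perm, Nat.factorial_succ]

private lemma main_count : ∀ (q : ℕ) (P : Finset ℕ), (∀ s ∈ P, 1 ≤ s ∧ s ≤ q) →
    Nat.card {w : Equiv.Perm (Fin q) // Cond q P w} * ∏ s ∈ P, s = q.factorial := by
  intro q
  induction q with
  | zero =>
    intro P hP
    have hPe : P = ∅ := Finset.eq_empty_of_forall_notMem (fun s hs => by
      have := hP s hs; omega)
    subst hPe
    have hall : ∀ w : Equiv.Perm (Fin 0), Cond 0 ∅ w := fun w m2 => m2.elim0
    rw [Nat.card_congr (Equiv.subtypeUnivEquiv hall)]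
    simp [Nat.card_eq_fintype_card, Fintype.card_perm]
  | succ q ih =>
    intro P hP
    have hF : ∀ (v : Fin (q + 1)) (σ : Equiv.Perm (Fin q)) (x : Fin (q + 1)),
        (Equiv.ofBijective _ (ins_bijective q)) (v, σ) x = ins v σ x := fun _ _ _ => rfl
    set F := Equiv.ofBijective _ (ins_bijective q) with hFdef
    by_cases hq : q + 1 ∈ P
    · -- the last position is prescribed
      have key : ∀ p : Fin (q + 1) × Equiv.Perm (Fin q),
          (p.1 = Fin.last q ∧ Cond q (P.erase (q + 1)) p.2) ↔ Cond (q + 1) P (F p) := by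
        rintro ⟨v, σ⟩
        constructor
        · rintro ⟨rfl, hσ⟩ m2 hm2 m1 hm1
          by_cases hlast : m2 = Fin.last q
          · subst hlast
            simp only [hF]
            rw [ins_last]
            exact Fin.le_last _
          · have hm2q : (m2 : ℕ) < q := by
              have := m2.isLt
              have : (m2 : ℕ) ≠ q := fun h => hlast (Fin.ext h)
              omega
            obtain ⟨k, rfl⟩ : ∃ k : Fin q, m2 = Fin.castSucc k :=
              ⟨m2.castLT hm2q, (Fin.castSucc_castLT m2 hm2q).symm⟩
            have hm1q : (m1 : ℕ) < q := by
              have := hm1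
              have : (m1 : ℕ) ≤ (k : ℕ) := this
              have := k.isLt
              omega
            obtain ⟨l, rfl⟩ : ∃ l : Fin q, m1 = Fin.castSucc l :=
              ⟨m1.castLT hm1q, (Fin.castSucc_castLT m1 hm1q).symm⟩
            rw [hF, hF, ins_castSucc, ins_castSucc]
            rw [Fin.succAbove_le_succAbove_iff]
            refine hσ k ?_ l (by exact_mod_cast hm1)
            refine Finset.mem_erase.mpr ⟨?_, ?_⟩
            · have := k.isLt; omega
            · simpa using hm2
        · intro hw
          have hv : v = Fin.last q := by
            have h1 := hw (Fin.last q) (by simpa using hq) ((F (v, σ)).symm (Fin.last q))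
              (Fin.le_last _)
            rw [Equiv.apply_symm_apply, hF, ins_last] at h1
            exact le_antisymm (Fin.le_last v) h1
          refine ⟨hv, fun k hk m1 hm1 => ?_⟩
          have hkP : (k : ℕ) + 1 ∈ P := (Finset.mem_erase.mp hk).2
          have := hw (Fin.castSucc k) (by simpa using hkP) (Fin.castSucc m1)
            (by simpa using hm1)
          rw [hF, hF, ins_castSucc, ins_castSucc] at this
          exact Fin.succAbove_le_succAbove_iff.mp this
      have e1 : {p : Fin (q + 1) × Equiv.Perm (Fin q) //
            p.1 = Fin.last q ∧ Cond q (P.erase (q + 1)) p.2} ≃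
          {w : Equiv.Perm (Fin (q + 1)) // Cond (q + 1) P w} :=
        Equiv.subtypeEquiv F key
      have e2 : {p : Fin (q + 1) × Equiv.Perm (Fin q) //
            p.1 = Fin.last q ∧ Cond q (P.erase (q + 1)) p.2} ≃
          {σ : Equiv.Perm (Fin q) // Cond q (P.erase (q + 1)) σ} :=
        { toFun := fun x => ⟨x.1.2, x.2.2⟩
          invFun := fun y => ⟨(Fin.last q, y.1), rfl, y.2⟩
          left_inv := fun x => by
            obtain ⟨⟨a, b⟩, h1, h2⟩ := x
            simp only [Subtype.mk.injEq, Prod.mk.injEq]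
            exact ⟨h1.symm, trivial⟩
          right_inv := fun y => rfl }
      have hcard : Nat.card {w : Equiv.Perm (Fin (q + 1)) // Cond (q + 1) P w} =
          Nat.card {σ : Equiv.Perm (Fin q) // Cond q (P.erase (q + 1)) σ} :=
        Nat.card_congr (e1.symm.trans e2)
      have hprod : ∏ s ∈ P, s = (q + 1) * ∏ s ∈ P.erase (q + 1), s :=
        (Finset.mul_prod_erase P id hq).symm
      have hsub : ∀ s ∈ P.erase (q + 1), 1 ≤ s ∧ s ≤ q := by
        intro s hs
        obtain ⟨hne, hsP⟩ := Finset.mem_erase.mp hs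
        have := hP s hsP
        omega
      rw [hcard, hprod, Nat.factorial_succ]
      calc Nat.card {σ : Equiv.Perm (Fin q) // Cond q (P.erase (q + 1)) σ} *
            ((q + 1) * ∏ s ∈ P.erase (q + 1), s)
          = (q + 1) * (Nat.card {σ : Equiv.Perm (Fin q) // Cond q (P.erase (q + 1)) σ} *
            ∏ s ∈ P.erase (q + 1), s) := by ring
        _ = (q + 1) * q.factorial := by rw [ih _ hsub]
    · -- the last position is free
      have hsub : ∀ s ∈ P, 1 ≤ s ∧ s ≤ q := by
        intro s hs
        have h1 := hP s hs
        have : s ≠ q + 1 := fun h => hq (h ▸ hs)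
        omega
      have key : ∀ p : Fin (q + 1) × Equiv.Perm (Fin q),
          Cond q P p.2 ↔ Cond (q + 1) P (F p) := by
        rintro ⟨v, σ⟩
        constructor
        · intro hσ m2 hm2 m1 hm1
          have hm2q : (m2 : ℕ) < q := by
            have := (hsub _ hm2).2
            omega
          obtain ⟨k, rfl⟩ : ∃ k : Fin q, m2 = Fin.castSucc k :=
            ⟨m2.castLT hm2q, (Fin.castSucc_castLT m2 hm2q).symm⟩
          have hm1q : (m1 : ℕ) < q := by
            have h2 : (m1 : ℕ) ≤ (k : ℕ) := hm1
            have := k.isLt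
            omega
          obtain ⟨l, rfl⟩ : ∃ l : Fin q, m1 = Fin.castSucc l :=
            ⟨m1.castLT hm1q, (Fin.castSucc_castLT m1 hm1q).symm⟩
          rw [hF, hF, ins_castSucc, ins_castSucc, Fin.succAbove_le_succAbove_iff]
          exact hσ k (by simpa using hm2) l (by exact_mod_cast hm1)
        · intro hw k hk m1 hm1
          have := hw (Fin.castSucc k) (by simpa using hk) (Fin.castSucc m1)
            (by simpa using hm1)
          rw [hF, hF, ins_castSucc, ins_castSucc] at this
          exact Fin.succAbove_le_succAbove_iff.mp this
      have e1 : {p : Fin (q + 1) × Equiv.Perm (Fin q) // Cond q P p.2} ≃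
          {w : Equiv.Perm (Fin (q + 1)) // Cond (q + 1) P w} :=
        Equiv.subtypeEquiv F key
      have e2 : {p : Fin (q + 1) × Equiv.Perm (Fin q) // Cond q P p.2} ≃
          Fin (q + 1) × {σ : Equiv.Perm (Fin q) // Cond q P σ} :=
        { toFun := fun x => (x.1.1, ⟨x.1.2, x.2⟩)
          invFun := fun y => ⟨(y.1, y.2.1), y.2.2⟩
          left_inv := fun x => rfl
          right_inv := fun y => rfl }
      have hcard : Nat.card {w : Equiv.Perm (Fin (q + 1)) // Cond (q + 1) P w} =
          (q + 1) * Nat.card {σ : Equiv.Perm (Fin q) // Cond q P σ} := by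
        rw [Nat.card_congr (e1.symm.trans e2), Nat.card_prod, Nat.card_eq_fintype_card,
          Fintype.card_fin]
      rw [hcard, Nat.factorial_succ, mul_assoc, ih _ hsub]

end RunningMax

/-- The number of words `w` (permutations of `(1,…,q)`) whose letters at the positions
`j₁, j₁+j₂, …, j₁+⋯+j_r` are running maxima equals `q!/φ(j)`. -/
theorem card_words_with_prescribed_running_maxima (q : ℕ) (j : List ℕ)
    (hpos : ∀ x ∈ j, 0 < x) (hsum : j.sum = q) :
    (Nat.card {w : Equiv.Perm (Fin q) //
        ∀ m2 : Fin q, (∃ i < j.length, (j.take (i + 1)).sum = (m2 : ℕ) + 1) →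
          ∀ m1 : Fin q, m1 ≤ m2 → w m1 ≤ w m2} : ℚ) =
      (q.factorial : ℚ) / (phi j : ℚ) := by
  classical
  set L : List ℕ := (List.range j.length).map (fun i => (j.take (i + 1)).sum) with hL
  set P : Finset ℕ := L.toFinset with hPdef
  -- partial sums are positive and bounded by q
  have hpos' : ∀ i < j.length, 0 < (j.take (i + 1)).sum := by
    intro i hi
    apply List.sum_pos
    · intro x hx; exact hpos x (List.mem_of_mem_take hx)
    · have : (j.take (i + 1)).length = i + 1 := by
        rw [List.length_take]; omega
      intro h; rw [h] at this; simp at this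
  have hle : ∀ i, (j.take (i + 1)).sum ≤ q := by
    intro i
    have := List.sum_take_add_sum_drop j (i + 1)
    omega
  -- strict monotonicity of partial sums, hence nodup
  have hmono : ∀ a b : ℕ, a < b → b < j.length → (j.take (a + 1)).sum < (j.take (b + 1)).sum := by
    intro a b hab hb
    induction b with
    | zero => omega
    | succ b ihb =>
      have hb1 : b + 1 < j.length := hb
      have hstep : (j.take (b + 1)).sum < (j.take (b + 1 + 1)).sum := by
        have heq := List.sum_take_succ j (b + 1) hb1
        have hel : 0 < j[b + 1]'hb1 := hpos _ (List.getElem_mem hb1)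
        omega
      rcases Nat.lt_or_ge a b with h | h
      · exact lt_trans (ihb h (by omega)) hstep
      · have : a = b := by omega
        subst this; exact hstep
  have hnodup : L.Nodup := by
    rw [hL]
    apply List.Nodup.map_on _ List.nodup_range
    intro x hx y hy hxy
    rw [List.mem_range] at hx hy
    by_contra hne
    rcases Nat.lt_or_ge x y with h | h
    · exact absurd hxy (Nat.ne_of_lt (hmono x y h hy))
    · have h' : y < x := by omega
      exact absurd hxy.symm (Nat.ne_of_lt (hmono y x h' hx))
  have hbound : ∀ s ∈ P, 1 ≤ s ∧ s ≤ q := by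
    intro s hs
    rw [hPdef, List.mem_toFinset, hL, List.mem_map] at hs
    obtain ⟨i, hi, rfl⟩ := hs
    rw [List.mem_range] at hi
    exact ⟨hpos' i hi, hle i⟩
  have hmain := main_count q P hbound
  have hcond : ∀ w : Equiv.Perm (Fin q),
      (∀ m2 : Fin q, (∃ i < j.length, (j.take (i + 1)).sum = (m2 : ℕ) + 1) →
        ∀ m1 : Fin q, m1 ≤ m2 → w m1 ≤ w m2) ↔ Cond q P w := by
    intro w
    unfold Cond
    apply forall_congr'
    intro m2
    have : ((m2 : ℕ) + 1 ∈ P) ↔ (∃ i < j.length, (j.take (i + 1)).sum = (m2 : ℕ) + 1) := by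
      rw [hPdef, List.mem_toFinset, hL, List.mem_map]
      constructor
      · rintro ⟨i, hi, h⟩; exact ⟨i, List.mem_range.mp hi, h⟩
      · rintro ⟨i, hi, h⟩; exact ⟨i, List.mem_range.mpr hi, h⟩
    rw [this]
  have hcard : Nat.card {w : Equiv.Perm (Fin q) //
      ∀ m2 : Fin q, (∃ i < j.length, (j.take (i + 1)).sum = (m2 : ℕ) + 1) →
        ∀ m1 : Fin q, m1 ≤ m2 → w m1 ≤ w m2} =
      Nat.card {w : Equiv.Perm (Fin q) // Cond q P w} :=
    Nat.card_congr (Equiv.subtypeEquivRight hcond)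
  have hphi : ∏ s ∈ P, s = phi j := by
    have := List.prod_toFinset (id : ℕ → ℕ) hnodup
    rw [List.map_id] at this
    rw [hPdef]
    calc (∏ s ∈ L.toFinset, s) = L.toFinset.prod id := rfl
      _ = L.prod := this
      _ = phi j := by rw [hL]; rfl
  have hphipos : 0 < phi j := by
    rw [phi]
    rw [CanonicallyOrderedAdd.list_prod_pos]
    intro x hx
    rw [List.mem_map] at hx
    obtain ⟨i, hi, rfl⟩ := hx
    exact hpos' i (List.mem_range.mp hi)
  rw [hcard]
  rw [hphi] at hmain
  have hphiQ : (phi j : ℚ) ≠ 0 := by exact_mod_cast hphipos.ne'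
  rw [eq_div_iff hphiQ]
  exact_mod_cast hmain
end
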